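/- arXiv:1309.2612 — 8 statements merged into one kernel-verified Lean document; each statement's English description precedes it below -/
import Mathlib

section
/- If a series ∑ Tₙ of bounded linear operators Tₙ : E → F between Banach spaces is independently convergent (i.e., ∑ Tₙ xₙ converges in norm for every bounded sequence (xₙ) in E), then ∑ Tₙ converges in the operator norm topology of L(E,F). -/
open Filter Topology

/-- A series of bounded operators `∑ Tₙ` is *independently convergent* if
`∑ Tₙ xₙ` converges in norm for every bounded sequence `(xₙ)`. -/
def IndepConv {E F : Type*} [NormedAddCommGroup E] [NormedSpace ℝ E]
    [NormedAddCommGroup F] [NormedSpace ℝ F] (T : ℕ → E →L[ℝ] F) : Prop :=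
  ∀ x : ℕ → E, (∃ C : ℝ, ∀ n, ‖x n‖ ≤ C) →
    ∃ y : F, Tendsto (fun N => ∑ n ∈ Finset.range N, T n (x n)) atTop (𝓝 y)

/-- If a series of bounded operators between Banach spaces is independently convergent,
then it converges in the operator norm topology. -/
theorem indepConv_tendsto_opNorm {E F : Type*}
    [NormedAddCommGroup E] [NormedSpace ℝ E] [CompleteSpace E]
    [NormedAddCommGroup F] [NormedSpace ℝ F] [CompleteSpace F]
    (T : ℕ → E →L[ℝ] F) (h : IndepConv T) :
    ∃ S : E →L[ℝ] F, Tendsto (fun N => ∑ n ∈ Finset.range N, T n) atTop (𝓝 S) := by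
  have hC : CauchySeq (fun N => ∑ n ∈ Finset.range N, T n) := by
    by_contra hnc
    classical
    rw [Metric.cauchySeq_iff] at hnc
    push_neg at hnc
    obtain ⟨ε, hε, hkey⟩ := hnc
    -- For each N, there is a block [a,b) beyond N with big partial-sum norm.
    have key : ∀ N : ℕ, ∃ p : ℕ × ℕ, N ≤ p.1 ∧ p.1 < p.2 ∧
        ε ≤ ‖∑ k ∈ Finset.Ico p.1 p.2, T k‖ := by
      intro N
      obtain ⟨m, hm, n, hn, hd⟩ := hkey N
      have hmn : m ≠ n := by
        rintro rfl; simp at hd; linarith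
      rcases lt_or_gt_of_ne hmn with hlt | hlt
      · refine ⟨(m, n), hm, hlt, ?_⟩
        have := Finset.sum_Ico_eq_sub (fun k => T k) hlt.le
        rw [this]
        rw [dist_eq_norm] at hd
        rw [norm_sub_rev]; exact hd
      · refine ⟨(n, m), hn, hlt, ?_⟩
        have := Finset.sum_Ico_eq_sub (fun k => T k) hlt.le
        rw [this]
        rw [dist_eq_norm] at hd
        exact hd
    -- Recursively choose disjoint blocks.
    let g : ℕ → ℕ × ℕ := fun k =>
      Nat.rec (Classical.choose (key 0)) (fun _ prev => Classical.choose (key prev.2)) k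
    have hg0 : (g 0).1 < (g 0).2 ∧ ε ≤ ‖∑ k ∈ Finset.Ico (g 0).1 (g 0).2, T k‖ :=
      ⟨(Classical.choose_spec (key 0)).2.1, (Classical.choose_spec (key 0)).2.2⟩
    have hgs : ∀ k, (g k).2 ≤ (g (k+1)).1 ∧ (g (k+1)).1 < (g (k+1)).2 ∧
        ε ≤ ‖∑ j ∈ Finset.Ico (g (k+1)).1 (g (k+1)).2, T j‖ := fun k =>
      Classical.choose_spec (key (g k).2)
    have hlt : ∀ k, (g k).1 < (g k).2 := by
      intro k; cases k with
      | zero => exact hg0.1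
      | succ k => exact (hgs k).2.1
    have hbig : ∀ k, ε ≤ ‖∑ j ∈ Finset.Ico (g k).1 (g k).2, T j‖ := by
      intro k; cases k with
      | zero => exact hg0.2
      | succ k => exact (hgs k).2.2
    have hsep : ∀ k k', k < k' → (g k).2 ≤ (g k').1 := by
      intro k k' hkk'
      induction k' with
      | zero => omega
      | succ k' ih =>
        rcases Nat.lt_succ_iff_lt_or_eq.mp hkk' with h1 | h1
        · exact le_trans (ih h1) (le_trans (hlt k').le (hgs k').1)
        · subst h1; exact (hgs k).1
    -- Choose unit vectors witnessing the operator norms.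
    have hvec : ∀ k, ∃ u : E, ‖u‖ < 1 ∧
        ε / 2 < ‖(∑ j ∈ Finset.Ico (g k).1 (g k).2, T j) u‖ := by
      intro k
      exact (∑ j ∈ Finset.Ico (g k).1 (g k).2, T j).exists_lt_apply_of_lt_opNorm
        (lt_of_lt_of_le (by linarith) (hbig k))
    choose u hu1 hu2 using hvec
    -- The gliding-hump sequence.
    have huniq : ∀ j k k', (g k).1 ≤ j → j < (g k).2 → (g k').1 ≤ j → j < (g k').2 →
        k = k' := by
      intro j k k' h1 h2 h3 h4
      by_contra hne
      rcases lt_or_gt_of_ne hne with hc | hc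
      · exact absurd (hsep k k' hc) (by omega)
      · exact absurd (hsep k' k hc) (by omega)
    let x : ℕ → E := fun j =>
      if hj : ∃ k, (g k).1 ≤ j ∧ j < (g k).2 then u (Classical.choose hj) else 0
    have hxk : ∀ k j, (g k).1 ≤ j → j < (g k).2 → x j = u k := by
      intro k j h1 h2
      have hj : ∃ k, (g k).1 ≤ j ∧ j < (g k).2 := ⟨k, h1, h2⟩
      have hspec := Classical.choose_spec hj
      have : Classical.choose hj = k :=
        huniq j _ k hspec.1 hspec.2 h1 h2
      simp only [x, dif_pos hj, this]
    have hxbd : ∀ j, ‖x j‖ ≤ 1 := by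
      intro j
      by_cases hj : ∃ k, (g k).1 ≤ j ∧ j < (g k).2
      · simp only [x, dif_pos hj]; exact (hu1 _).le
      · simp only [x, dif_neg hj]; simp
    -- The partial sums of ∑ Tⱼ xⱼ converge, hence are Cauchy.
    obtain ⟨y, hy⟩ := h x ⟨1, hxbd⟩
    have hcau := hy.cauchySeq
    rw [Metric.cauchySeq_iff'] at hcau
    obtain ⟨N, hN⟩ := hcau (ε / 4) (by linarith)
    -- But the block from a N to b N has norm > ε/2.
    have ha : N ≤ (g N).1 := by
      have : ∀ k, k ≤ (g k).1 := by
        intro k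
        induction k with
        | zero => exact Nat.zero_le _
        | succ k ih => have := hsep k (k+1) (Nat.lt_succ_self k)
                       have := hlt k; omega
      exact this N
    have h1 := hN (g N).2 (by have := hlt N; omega)
    have h2 := hN (g N).1 ha
    have hdiff : (∑ n ∈ Finset.range (g N).2, T n (x n)) -
        (∑ n ∈ Finset.range (g N).1, T n (x n)) =
        (∑ j ∈ Finset.Ico (g N).1 (g N).2, T j) (u N) := by
      rw [← Finset.sum_Ico_eq_sub (fun n => T n (x n)) (hlt N).le]
      rw [ContinuousLinearMap.coe_sum', Finset.sum_apply]
      apply Finset.sum_congr rfl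
      intro j hj
      rw [Finset.mem_Ico] at hj
      rw [hxk N j hj.1 hj.2]
    rw [dist_eq_norm] at h1 h2
    have htri : ‖(∑ j ∈ Finset.Ico (g N).1 (g N).2, T j) (u N)‖ < ε / 2 := by
      rw [← hdiff]
      set P := fun M => ∑ n ∈ Finset.range M, T n (x n) with hP
      have : P (g N).2 - P (g N).1 = (P (g N).2 - P N) - (P (g N).1 - P N) := by abel
      rw [this]
      calc ‖_ - _‖ ≤ ‖P (g N).2 - P N‖ + ‖P (g N).1 - P N‖ := norm_sub_le _ _
        _ < ε / 2 := by linarith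
    linarith [hu2 N]
  exact cauchySeq_tendsto_of_complete hC
end

section
/- If a series ∑ Tₙ of bounded linear operators Tₙ : E → F is independently convergent, then the tail operators Sₙ : E → F defined by Sₙ x = ∑_{k≥n} Tₖ x are bounded linear operators and ‖Sₙ‖ → 0 as n → ∞. -/
open Filter Topology

/-- If `∑ Tₙ` is independently convergent, the tail operators `Sₙ x = ∑_{k ≥ n} Tₖ x`
are bounded linear operators and `‖Sₙ‖ → 0`. -/
theorem indepConv_tail_opNorm_tendsto_zero {E F : Type*}
    [NormedAddCommGroup E] [NormedSpace ℝ E] [CompleteSpace E]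
    [NormedAddCommGroup F] [NormedSpace ℝ F] [CompleteSpace F]
    (T : ℕ → E →L[ℝ] F) (h : IndepConv T) :
    ∃ S : ℕ → E →L[ℝ] F,
      (∀ (n : ℕ) (x : E),
        Tendsto (fun N => ∑ k ∈ Finset.Ico n N, T k x) atTop (𝓝 (S n x))) ∧
      Tendsto (fun n => ‖S n‖) atTop (𝓝 0) := by
  classical
  -- the whole series converges pointwise
  have hconv : ∀ x : E, ∃ y : F,
      Tendsto (fun N => ∑ k ∈ Finset.range N, T k x) atTop (𝓝 y) := by
    intro x
    exact h (fun _ => x) ⟨‖x‖, fun _ => le_rfl⟩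
  choose L hL using hconv
  -- partial sum operators and uniform bound (Banach–Steinhaus)
  set P : ℕ → E →L[ℝ] F := fun N => ∑ k ∈ Finset.range N, T k with hPdef
  have hPapp : ∀ N x, P N x = ∑ k ∈ Finset.range N, T k x := by
    intro N x
    simp [hPdef, ContinuousLinearMap.sum_apply]
  have hLP : ∀ x, Tendsto (fun N => P N x) atTop (𝓝 (L x)) := by
    intro x
    simpa [hPapp] using hL x
  obtain ⟨C, hC⟩ : ∃ C, ∀ N, ‖P N‖ ≤ C := by
    apply banach_steinhaus
    intro x
    obtain ⟨B, hB⟩ := (hLP x).norm.bddAbove_range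
    exact ⟨B, fun N => hB ⟨N, rfl⟩⟩
  -- linear tail maps
  have hbound : ∀ n x, ‖L x - P n x‖ ≤ (C + C) * ‖x‖ := by
    intro n x
    refine le_of_tendsto ((hLP x).sub tendsto_const_nhds).norm
      (Eventually.of_forall fun N => ?_)
    calc ‖P N x - P n x‖ ≤ ‖P N x‖ + ‖P n x‖ := norm_sub_le _ _
      _ ≤ C * ‖x‖ + C * ‖x‖ := by
          gcongr
          · exact (P N).le_opNorm x |>.trans (by gcongr; exact hC N)
          · exact (P n).le_opNorm x |>.trans (by gcongr; exact hC n)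
      _ = (C + C) * ‖x‖ := by ring
  have hLadd : ∀ x y, L (x + y) = L x + L y := by
    intro x y
    refine tendsto_nhds_unique ?_ ((hLP x).add (hLP y))
    simpa [map_add] using hLP (x + y)
  have hLsmul : ∀ (c : ℝ) x, L (c • x) = c • L x := by
    intro c x
    refine tendsto_nhds_unique ?_ ((hLP x).const_smul c)
    simpa [map_smul] using hLP (c • x)
  set S : ℕ → E →L[ℝ] F := fun n =>
    LinearMap.mkContinuous
      { toFun := fun x => L x - P n x
        map_add' := fun x y => by simp [hLadd, map_add]; abel
        map_smul' := fun c x => by simp [hLsmul, map_smul, smul_sub] }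
      (C + C) (hbound n) with hSdef
  have hSapp : ∀ n x, S n x = L x - P n x := fun n x => rfl
  have hS1 : ∀ (n : ℕ) (x : E),
      Tendsto (fun N => ∑ k ∈ Finset.Ico n N, T k x) atTop (𝓝 (S n x)) := by
    intro n x
    have h1 : Tendsto (fun N => P N x - P n x) atTop (𝓝 (S n x)) := by
      rw [hSapp]
      exact (hLP x).sub tendsto_const_nhds
    refine h1.congr' ?_
    filter_upwards [eventually_ge_atTop n] with N hN
    rw [hPapp, hPapp, ← Finset.sum_Ico_eq_sub (fun k => T k x) hN]
  refine ⟨S, hS1, ?_⟩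
  -- norm convergence to 0, by contradiction (gliding hump)
  by_contra hcon
  rw [Metric.tendsto_atTop] at hcon
  push_neg at hcon
  obtain ⟨ε, hε, hfreq⟩ := hcon
  set δ := ε / 2 with hδdef
  have hδ : 0 < δ := by positivity
  have hδε : δ < ε := by
    rw [hδdef]; linarith
  -- key step: blocks with large sums arbitrarily far out
  have key : ∀ N : ℕ, ∃ p : ℕ × ℕ × E,
      N ≤ p.1 ∧ p.1 < p.2.1 ∧ ‖p.2.2‖ ≤ 1 ∧
        δ < ‖∑ k ∈ Finset.Ico p.1 p.2.1, T k p.2.2‖ := by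
    intro N
    obtain ⟨n, hnN, hn⟩ := hfreq N
    have hSn : δ < ‖S n‖ := by
      have : ε ≤ ‖S n‖ := by
        rw [Real.dist_eq, sub_zero, abs_of_nonneg (norm_nonneg _)] at hn
        exact hn
      linarith
    obtain ⟨x, hx1, hx2⟩ := (S n).exists_lt_apply_of_lt_opNorm hSn
    have hev : ∀ᶠ M in atTop, δ < ‖∑ k ∈ Finset.Ico n M, T k x‖ :=
      (hS1 n x).norm.eventually (eventually_gt_nhds hx2)
    obtain ⟨M, hM1, hM2⟩ := (hev.and (eventually_ge_atTop (n + 1))).exists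
    exact ⟨⟨n, M, x⟩, hnN, hM2, hx1.le, hM1⟩
  choose f hfN hflt hfnorm hfbig using key
  -- recursively chosen blocks
  set seq : ℕ → ℕ × ℕ × E := fun j => Nat.rec (f 0) (fun _ prev => f prev.2.1) j
    with hseq
  set a : ℕ → ℕ := fun j => (seq j).1 with ha
  set b : ℕ → ℕ := fun j => (seq j).2.1 with hb
  set w : ℕ → E := fun j => (seq j).2.2 with hw
  have hseq0 : seq 0 = f 0 := rfl
  have hseqS : ∀ j, seq (j + 1) = f (b j) := fun j => rfl
  have hab : ∀ j, a j < b j := by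
    intro j
    cases j with
    | zero => exact hflt 0
    | succ j => exact hflt (b j)
  have hba : ∀ j, b j ≤ a (j + 1) := by
    intro j
    exact hfN (b j)
  have hwnorm : ∀ j, ‖w j‖ ≤ 1 := by
    intro j
    cases j with
    | zero => exact hfnorm 0
    | succ j => exact hfnorm (b j)
  have hbig : ∀ j, δ < ‖∑ k ∈ Finset.Ico (a j) (b j), T k (w j)‖ := by
    intro j
    cases j with
    | zero => exact hfbig 0
    | succ j => exact hfbig (b j)
  have hamono : StrictMono a :=
    strictMono_nat_of_lt_succ fun j => lt_of_lt_of_le (hab j) (hba j)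
  have hja : ∀ j, j ≤ a j := fun j => hamono.le_apply
  -- blocks are disjoint in order
  have hsep : ∀ j j', j < j' → b j ≤ a j' := by
    intro j j' hjj'
    induction j' with
    | zero => omega
    | succ j' ih =>
      rcases Nat.lt_succ_iff_lt_or_eq.mp hjj' with hlt | heq
      · exact (ih hlt).trans ((hab j').le.trans (hba j'))
      · rw [heq]; exact hba j'
  -- the gliding-hump sequence
  set z : ℕ → E := fun k =>
    if hk : ∃ j, a j ≤ k ∧ k < b j then w hk.choose else 0 with hz
  have hzval : ∀ j k, a j ≤ k → k < b j → z k = w j := by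
    intro j k h1 h2
    have hk : ∃ j, a j ≤ k ∧ k < b j := ⟨j, h1, h2⟩
    have hch := hk.choose_spec
    have : hk.choose = j := by
      rcases lt_trichotomy hk.choose j with hlt | heq | hgt
      · exact absurd (hsep _ _ hlt) (by omega)
      · exact heq
      · exact absurd (hsep _ _ hgt) (by omega)
    simp only [hz, dif_pos hk, this]
  have hzbd : ∀ k, ‖z k‖ ≤ 1 := by
    intro k
    by_cases hk : ∃ j, a j ≤ k ∧ k < b j
    · simp only [hz, dif_pos hk]
      exact hwnorm _
    · simp [hz, dif_neg hk]
  obtain ⟨y, hy⟩ := h z ⟨1, hzbd⟩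
  have hcauchy := hy.cauchySeq
  rw [Metric.cauchySeq_iff] at hcauchy
  obtain ⟨N, hN⟩ := hcauchy δ hδ
  have h1 : N ≤ a N := hja N
  have h2 : N ≤ b N := h1.trans (hab N).le
  have hd := hN (b N) h2 (a N) h1
  rw [dist_eq_norm, ← Finset.sum_Ico_eq_sub (fun k => T k (z k)) (hab N).le] at hd
  have heq : ∑ k ∈ Finset.Ico (a N) (b N), T k (z k)
      = ∑ k ∈ Finset.Ico (a N) (b N), T k (w N) := by
    refine Finset.sum_congr rfl fun k hk => ?_
    rw [Finset.mem_Ico] at hk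
    rw [hzval N k hk.1 hk.2]
  rw [heq] at hd
  exact absurd hd (not_lt.mpr (hbig N).le)
end

section
/- Every i-measure has finite total semivariation: if μ : 𝓜 → L(E,F) is an i-measure on a σ-algebra 𝓜 of subsets of a set Z, then ‖μ‖_Z < ∞. -/
/-!
A gliding hump argument. First, the range of `μ` is bounded in operator norm: since
`μ D = μ (D ∩ U) + μ (D \ U)`, a set on which `μ` is unbounded splits, for every measurable `U`,
into a part on which `μ` is still unbounded and a part `D` with `‖μ D‖ > 1`. Peeling off such
sets `D₀, D₁, …` and choosing `‖xₙ‖ ≤ 1` with `‖μ Dₙ xₙ‖ ≥ 1` contradicts the convergence of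
`∑ μ Dₙ xₙ`.

With a bound `M` in hand the same peeling works for the semivariation, which is finitely
subadditive over measurable splits. From a set of infinite semivariation take a finite disjoint
family with `‖∑ μ Bᵢ xᵢ‖ > 1 + M`: either the rest of the set still has infinite
semivariation, or some `Bᵢ` has, and then dropping `Bᵢ` from the family costs at most `M`.
Concatenating the finite families so obtained gives a single disjoint sequence `Cₙ` and
`‖yₙ‖ ≤ 1` such that `∑ μ Cₙ yₙ` has infinitely many blocks of norm at least `1`.
-/

open Filter Topology ENNReal

/-- An *i-measure* is an operator-valued set function which is countably additive in the
strong operator topology, and such that `∑ μ(Aₙ)` is independently convergent for every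
sequence of pairwise disjoint measurable sets `(Aₙ)`. -/
def IsIMeasure {Z E F : Type*} [MeasurableSpace Z]
    [NormedAddCommGroup E] [NormedSpace ℝ E] [NormedAddCommGroup F] [NormedSpace ℝ F]
    (μ : Set Z → E →L[ℝ] F) : Prop :=
  (∀ A : ℕ → Set Z, (∀ n, MeasurableSet (A n)) → Pairwise (Function.onFun Disjoint A) →
    ∀ x : E,
      Tendsto (fun N => ∑ n ∈ Finset.range N, μ (A n) x) atTop (𝓝 (μ (⋃ n, A n) x))) ∧
  (∀ A : ℕ → Set Z, (∀ n, MeasurableSet (A n)) → Pairwise (Function.onFun Disjoint A) →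
    IndepConv fun n => μ (A n))

/-- The semivariation `‖μ‖_A` of an operator-valued set function `μ` on a set `A`. -/
noncomputable def semivar {Z E F : Type*} [MeasurableSpace Z]
    [NormedAddCommGroup E] [NormedSpace ℝ E] [NormedAddCommGroup F] [NormedSpace ℝ F]
    (μ : Set Z → E →L[ℝ] F) (A : Set Z) : ℝ≥0∞ :=
  ⨆ (N : ℕ) (B : ℕ → Set Z) (_ : ∀ n, MeasurableSet (B n)) (_ : ∀ n, B n ⊆ A)
    (_ : Pairwise (Function.onFun Disjoint B)) (x : ℕ → E) (_ : ∀ n, ‖x n‖ ≤ 1),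
    ENNReal.ofReal ‖∑ n ∈ Finset.range N, μ (B n) (x n)‖

open Finset Function

theorem tendsto_sum_Ico_nhds_zero {G : Type*} [AddCommGroup G] [TopologicalSpace G]
    [IsTopologicalAddGroup G] {f : ℕ → G} {s : G}
    (hf : Tendsto (fun N => ∑ n ∈ range N, f n) atTop (𝓝 s)) {o : ℕ → ℕ} (ho : StrictMono o) :
    Tendsto (fun j => ∑ n ∈ Ico (o j) (o (j + 1)), f n) atTop (𝓝 0) := by
  have hsub := (hf.comp (ho.tendsto_atTop.comp (tendsto_add_atTop_nat 1))).sub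
    (hf.comp ho.tendsto_atTop)
  rw [sub_self] at hsub
  refine hsub.congr fun j => ?_
  simp [sum_Ico_eq_sub _ (ho.monotone j.le_succ)]

section BlockIndex

variable {o : ℕ → ℕ}

/-- For `o` strictly increasing with `o 0 = 0`, the index `j` of the block `[o j, o (j + 1))`
containing `n`. -/
def blockIndex (o : ℕ → ℕ) (n : ℕ) : ℕ := Nat.findGreatest (fun j => o j ≤ n) n

theorem blockIndex_mem_Ico (ho : StrictMono o) (ho0 : o 0 = 0) (n : ℕ) :
    o (blockIndex o n) ≤ n ∧ n < o (blockIndex o n + 1) := by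
  refine ⟨Nat.findGreatest_spec (P := fun j => o j ≤ n) (Nat.zero_le n) (by simp [ho0]), ?_⟩
  by_contra! h
  have hle : blockIndex o n + 1 ≤ blockIndex o n :=
    Nat.le_findGreatest ((ho.id_le _).trans h) h
  omega

theorem blockIndex_eq (ho : StrictMono o) (ho0 : o 0 = 0) {j n : ℕ} (h₁ : o j ≤ n)
    (h₂ : n < o (j + 1)) : blockIndex o n = j := by
  obtain ⟨h₃, h₄⟩ := blockIndex_mem_Ico ho ho0 n
  have := ho.lt_iff_lt.1 (h₃.trans_lt h₂)
  have := ho.lt_iff_lt.1 (h₁.trans_lt h₄)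
  omega

theorem sum_Ico_blockIndex {M : Type*} [AddCommMonoid M] (ho : StrictMono o) (ho0 : o 0 = 0)
    (g : ℕ → ℕ → M) (j : ℕ) :
    ∑ n ∈ Ico (o j) (o (j + 1)), g (blockIndex o n) (n - o (blockIndex o n)) =
      ∑ i ∈ range (o (j + 1) - o j), g j i := by
  rw [sum_Ico_eq_sum_range]
  refine sum_congr rfl fun i hi => ?_
  rw [blockIndex_eq ho ho0 (Nat.le_add_right _ _) (by simp at hi; omega), Nat.add_sub_cancel_left]

end BlockIndex

section IMeasure

variable {Z E F : Type*} [MeasurableSpace Z]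
  [NormedAddCommGroup E] [NormedSpace ℝ E] [NormedAddCommGroup F] [NormedSpace ℝ F]
  {μ : Set Z → E →L[ℝ] F}

namespace IsIMeasure

theorem empty (hμ : IsIMeasure μ) : μ ∅ = 0 := by
  ext x
  have hsum := hμ.1 (fun _ => ∅) (fun _ => .empty) (fun _ _ _ => disjoint_bot_left) x
  rw [Set.iUnion_empty] at hsum
  simpa using tendsto_sum_Ico_nhds_zero hsum strictMono_id

theorem union (hμ : IsIMeasure μ) {A B : Set Z} (hA : MeasurableSet A) (hB : MeasurableSet B)
    (hAB : Disjoint A B) : μ (A ∪ B) = μ A + μ B := by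
  ext x
  set S : ℕ → Set Z := fun n => if n = 0 then A else if n = 1 then B else ∅
  have hS : ∀ n, MeasurableSet (S n) := by
    intro n; simp only [S]; split_ifs <;> simp [hA, hB]
  have hSd : Pairwise (Disjoint on S) := by
    refine (pairwise_disjoint_on S).2 fun m n hmn => ?_
    simp only [S]; split_ifs <;> first | omega | exact hAB | simp
  have hU : ⋃ n, S n = A ∪ B := by
    ext z; simp only [S, Set.mem_iUnion, Set.mem_union]
    constructor
    · rintro ⟨n, hn⟩; split_ifs at hn <;> simp_all
    · rintro (hz | hz)
      exacts [⟨0, by simpa using hz⟩, ⟨1, by simpa using hz⟩]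
  have hfin : HasSum (fun n => μ (S n) x) (∑ n ∈ range 2, μ (S n) x) :=
    hasSum_sum_of_ne_finset_zero fun n hn => by
      have : n ≠ 0 ∧ n ≠ 1 := by simp at hn; omega
      simp [S, this, hμ.empty]
  have hsum := hμ.1 S hS hSd x
  rw [hU] at hsum
  simpa [S, sum_range_succ] using tendsto_nhds_unique hsum hfin.tendsto_sum_nat

theorem inter_add_diff (hμ : IsIMeasure μ) {A U : Set Z} (hA : MeasurableSet A)
    (hU : MeasurableSet U) : μ (A ∩ U) + μ (A \ U) = μ A := by
  rw [← hμ.union (hA.inter hU) (hA.diff hU) (Set.disjoint_sdiff_inter.symm),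
    Set.inter_union_sdiff]

end IsIMeasure

theorem ofReal_norm_sum_le_semivar {A : Set Z} {N : ℕ} {B : ℕ → Set Z} {x : ℕ → E}
    (hB : ∀ n, MeasurableSet (B n)) (hBA : ∀ n, B n ⊆ A) (hBd : Pairwise (Disjoint on B))
    (hx : ∀ n, ‖x n‖ ≤ 1) :
    ENNReal.ofReal ‖∑ n ∈ range N, μ (B n) (x n)‖ ≤ semivar μ A :=
  le_iSup_of_le N <| le_iSup_of_le B <| le_iSup_of_le hB <| le_iSup_of_le hBA <|
    le_iSup_of_le hBd <| le_iSup_of_le x <| le_iSup_of_le hx le_rfl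

theorem semivar_le {A : Set Z} {c : ℝ≥0∞}
    (h : ∀ (N : ℕ) (B : ℕ → Set Z) (x : ℕ → E), (∀ n, MeasurableSet (B n)) → (∀ n, B n ⊆ A) →
      Pairwise (Disjoint on B) → (∀ n, ‖x n‖ ≤ 1) →
      ENNReal.ofReal ‖∑ n ∈ range N, μ (B n) (x n)‖ ≤ c) :
    semivar μ A ≤ c :=
  iSup_le fun N => iSup₂_le fun B hB => iSup₂_le fun hBA hBd => iSup₂_le fun x hx =>
    h N B x hB hBA hBd hx

theorem semivar_mono {A A' : Set Z} (h : A ⊆ A') : semivar μ A ≤ semivar μ A' :=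
  semivar_le fun _ _ _ hB hBA hBd hx =>
    ofReal_norm_sum_le_semivar hB (fun n => (hBA n).trans h) hBd hx

theorem exists_lt_norm_sum_of_semivar_eq_top {A : Set Z} (hA : semivar μ A = ⊤) (r : ℝ) :
    ∃ (N : ℕ) (B : ℕ → Set Z) (x : ℕ → E), (∀ n, MeasurableSet (B n)) ∧ (∀ n, B n ⊆ A) ∧
      Pairwise (Disjoint on B) ∧ (∀ n, ‖x n‖ ≤ 1) ∧ r < ‖∑ n ∈ range N, μ (B n) (x n)‖ := by
  by_contra! h
  have : semivar μ A ≤ ENNReal.ofReal r := semivar_le fun N B x hB hBA hBd hx =>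
    ENNReal.ofReal_le_ofReal (h N B x hB hBA hBd hx)
  exact ENNReal.ofReal_ne_top (top_le_iff.1 (hA ▸ this))

namespace IsIMeasure

theorem semivar_empty (hμ : IsIMeasure μ) : semivar μ ∅ = 0 :=
  nonpos_iff_eq_zero.1 <| semivar_le fun N B x _ hBA _ _ => by
    simp [Set.subset_empty_iff.1 (hBA _), hμ.empty]

theorem semivar_le_inter_add_diff (hμ : IsIMeasure μ) {U : Set Z} (hU : MeasurableSet U)
    (A : Set Z) : semivar μ A ≤ semivar μ (A ∩ U) + semivar μ (A \ U) := by
  refine semivar_le fun N B x hB hBA hBd hx => ?_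
  have hsplit : ∑ n ∈ range N, μ (B n) (x n) =
      ∑ n ∈ range N, μ (B n ∩ U) (x n) + ∑ n ∈ range N, μ (B n \ U) (x n) := by
    simp only [← sum_add_distrib, ← add_apply, hμ.inter_add_diff (hB _) hU]
  rw [hsplit]
  refine (ENNReal.ofReal_le_ofReal (norm_add_le _ _)).trans <| ENNReal.ofReal_add_le.trans ?_
  gcongr
  · exact ofReal_norm_sum_le_semivar (fun n => (hB n).inter hU)
      (fun n => Set.inter_subset_inter_left U (hBA n))
      (hBd.mono fun _ _ h => h.mono Set.inter_subset_left Set.inter_subset_left) hx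
  · exact ofReal_norm_sum_le_semivar (fun n => (hB n).diff hU)
      (fun n => Set.sdiff_subset_sdiff_left (hBA n))
      (hBd.mono fun _ _ h => h.mono Set.sdiff_subset Set.sdiff_subset) hx

theorem semivar_biUnion_le (hμ : IsIMeasure μ) {ι : Type*} {B : ι → Set Z}
    (hB : ∀ i, MeasurableSet (B i)) (s : Finset ι) :
    semivar μ (⋃ i ∈ s, B i) ≤ ∑ i ∈ s, semivar μ (B i) := by
  classical
  induction s using Finset.induction_on with
  | empty => simp [hμ.semivar_empty]
  | insert a s ha ih =>
    rw [set_biUnion_insert, sum_insert ha]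
    refine (hμ.semivar_le_inter_add_diff (hB a) _).trans (add_le_add ?_ ?_)
    · exact semivar_mono Set.inter_subset_right
    · exact (semivar_mono fun z hz => hz.1.resolve_left hz.2).trans ih

end IsIMeasure

structure IsHump (μ : Set Z → E →L[ℝ] F) (A : Set Z) (N : ℕ) (B : ℕ → Set Z) (x : ℕ → E) :
    Prop where
  measurableSet : ∀ i, MeasurableSet (B i)
  subset : ∀ i, B i ⊆ A
  pairwiseDisjoint : (range N : Set ℕ).PairwiseDisjoint B
  norm_le_one : ∀ i, ‖x i‖ ≤ 1
  one_le_norm_sum : 1 ≤ ‖∑ i ∈ range N, μ (B i) (x i)‖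

namespace IsIMeasure

theorem false_of_nested_humps (hμ : IsIMeasure μ) {A : ℕ → Set Z} {N : ℕ → ℕ}
    {B : ℕ → ℕ → Set Z} {x : ℕ → ℕ → E} (h : ∀ j, IsHump μ (A j) (N j) (B j) (x j))
    (hA : ∀ j, A (j + 1) ⊆ A j \ ⋃ i ∈ range (N j), B j i) : False := by
  have hN : ∀ j, 0 < N j := fun j => Nat.pos_of_ne_zero fun h0 => by
    have := (h j).one_le_norm_sum
    norm_num [h0] at this
  set o : ℕ → ℕ := fun j => ∑ k ∈ range j, N k
  have hsucc : ∀ j, o (j + 1) = o j + N j := fun j => sum_range_succ _ _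
  have ho : StrictMono o := strictMono_nat_of_lt_succ fun j => by
    rw [hsucc]; exact Nat.lt_add_of_pos_right (hN j)
  have ho0 : o 0 = 0 := sum_range_zero _
  set b := blockIndex o
  have hb : ∀ n, o (b n) ≤ n ∧ n < o (b n) + N (b n) := fun n => by
    simpa [hsucc] using blockIndex_mem_Ico ho ho0 n
  -- Concatenate the humps into one sequence; the `j`-th hump fills positions `[o j, o (j + 1))`.
  set C : ℕ → Set Z := fun n => B (b n) (n - o (b n))
  set y : ℕ → E := fun n => x (b n) (n - o (b n))
  have hC : Pairwise (Disjoint on C) := by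
    refine (pairwise_disjoint_on C).2 fun m n hmn => ?_
    have hbmn : b m ≤ b n := Nat.lt_succ_iff.1 <| ho.lt_iff_lt.1 <|
      (hb m).1.trans_lt (hmn.trans (by simpa [hsucc] using (hb n).2))
    rcases hbmn.lt_or_eq with hlt | heq
    · have hanti : Antitone A := antitone_nat_of_succ_le fun j => (hA j).trans Set.sdiff_subset
      have hCn : C n ⊆ A (b m) \ ⋃ i ∈ range (N (b m)), B (b m) i :=
        ((h _).subset _).trans ((hanti hlt).trans (hA _))
      have hCm : C m ⊆ ⋃ i ∈ range (N (b m)), B (b m) i :=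
        Set.subset_biUnion_of_mem (u := B (b m)) (mem_range.2 (by have := hb m; omega))
      exact Set.disjoint_sdiff_right.mono hCm hCn
    · have hm := hb m
      have hn := hb n
      simp only [C, heq] at hm ⊢
      exact (h (b n)).pairwiseDisjoint (by simp; omega) (by simp; omega) (by omega)
  obtain ⟨s, hs⟩ := hμ.2 C (fun n => (h _).measurableSet _) hC y ⟨1, fun n => (h _).norm_le_one _⟩
  have hblock : ∀ j, ∑ n ∈ Ico (o j) (o (j + 1)), μ (C n) (y n) =
      ∑ i ∈ range (N j), μ (B j i) (x j i) := fun j =>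
    (sum_Ico_blockIndex ho ho0 (fun j i => μ (B j i) (x j i)) j).trans
      (by rw [hsucc, Nat.add_sub_cancel_left])
  have hblocks := tendsto_sum_Ico_nhds_zero hs ho
  simp only [hblock] at hblocks
  obtain ⟨j, hj⟩ := (hblocks.norm.eventually (gt_mem_nhds (by simpa using one_pos))).exists
  exact hj.not_ge (h j).one_le_norm_sum

theorem not_of_exists_hump (hμ : IsIMeasure μ) {P : Set Z → Prop}
    (h : ∀ A, P A → ∃ (N : ℕ) (B : ℕ → Set Z) (x : ℕ → E),
      IsHump μ A N B x ∧ P (A \ ⋃ i ∈ range N, B i)) :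
    ¬ P Set.univ := by
  intro huniv
  choose! N B x hhump hrest using h
  let A : ℕ → Set Z := fun j => Nat.rec Set.univ (fun _ S => S \ ⋃ i ∈ range (N S), B S i) j
  have hA : ∀ j, P (A j) := fun j => by
    induction j with
    | zero => exact huniv
    | succ j ih => exact hrest _ ih
  exact hμ.false_of_nested_humps (fun j => hhump _ (hA j)) fun _ => subset_rfl

end IsIMeasure

def UnboundedOn (μ : Set Z → E →L[ℝ] F) (A : Set Z) : Prop :=
  ∀ r : ℝ, ∃ B ⊆ A, MeasurableSet B ∧ r < ‖μ B‖

namespace IsIMeasure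

theorem unboundedOn_inter_or_diff (hμ : IsIMeasure μ) {A U : Set Z} (hU : MeasurableSet U)
    (h : UnboundedOn μ A) : UnboundedOn μ (A ∩ U) ∨ UnboundedOn μ (A \ U) := by
  by_contra! hbdd
  simp only [UnboundedOn, not_forall, not_exists, not_and, not_lt] at hbdd
  obtain ⟨⟨r₁, hr₁⟩, ⟨r₂, hr₂⟩⟩ := hbdd
  obtain ⟨D, hDA, hD, hlt⟩ := h (r₁ + r₂)
  have h₁ := hr₁ (D ∩ U) (Set.inter_subset_inter_left U hDA) (hD.inter hU)
  have h₂ := hr₂ (D \ U) (Set.sdiff_subset_sdiff_left hDA) (hD.diff hU)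
  have := norm_add_le (μ (D ∩ U)) (μ (D \ U))
  rw [hμ.inter_add_diff hD hU] at this
  linarith

theorem exists_lt_norm_and_unboundedOn_diff (hμ : IsIMeasure μ) {A : Set Z}
    (hA : MeasurableSet A) (h : UnboundedOn μ A) (r : ℝ) :
    ∃ D ⊆ A, MeasurableSet D ∧ r < ‖μ D‖ ∧ UnboundedOn μ (A \ D) := by
  obtain ⟨B, hBA, hB, hlt⟩ := h (r + ‖μ A‖)
  rcases hμ.unboundedOn_inter_or_diff hB h with hinter | hdiff
  · refine ⟨A \ B, Set.sdiff_subset, hA.diff hB, ?_, by rwa [Set.sdiff_sdiff_right_self]⟩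
    have hsplit := hμ.inter_add_diff hA hB
    rw [Set.inter_eq_right.2 hBA] at hsplit
    rw [← sub_eq_of_eq_add' hsplit.symm, norm_sub_rev]
    linarith [norm_sub_norm_le (μ B) (μ A)]
  · exact ⟨B, hBA, hB, by linarith [norm_nonneg (μ A)], hdiff⟩

theorem exists_norm_le (hμ : IsIMeasure μ) :
    ∃ M : ℝ, ∀ B : Set Z, MeasurableSet B → ‖μ B‖ ≤ M := by
  by_contra! h
  refine hμ.not_of_exists_hump (P := fun A => MeasurableSet A ∧ UnboundedOn μ A)
    (fun A ⟨hA, hunb⟩ => ?_) ⟨MeasurableSet.univ, fun r => ?_⟩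
  · obtain ⟨D, hDA, hD, hlt, hrest⟩ := hμ.exists_lt_norm_and_unboundedOn_diff hA hunb 1
    obtain ⟨v, hv, hlt'⟩ := (μ D).exists_lt_apply_of_lt_opNorm hlt
    refine ⟨1, fun _ => D, fun _ => v,
      ⟨fun _ => hD, fun _ => hDA, by simp, fun _ => hv.le, by simpa using hlt'.le⟩, ?_⟩
    simpa using ⟨hA.diff hD, hrest⟩
  · obtain ⟨B, hB, hlt⟩ := h r
    exact ⟨B, Set.subset_univ _, hB, hlt⟩

theorem exists_semivar_eq_top_of_biUnion (hμ : IsIMeasure μ) {ι : Type*} {B : ι → Set Z}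
    (hB : ∀ i, MeasurableSet (B i)) {s : Finset ι} {A : Set Z} (hA : semivar μ A = ⊤)
    (hrest : semivar μ (A \ ⋃ i ∈ s, B i) ≠ ⊤) : ∃ i ∈ s, semivar μ (B i) = ⊤ := by
  have hU := hμ.semivar_le_inter_add_diff (s.measurableSet_biUnion fun i _ => hB i) A
  rw [hA, top_le_iff, ENNReal.add_eq_top, or_iff_left hrest] at hU
  rw [← ENNReal.sum_eq_top, ← top_le_iff, ← hU]
  exact (semivar_mono Set.inter_subset_right).trans (hμ.semivar_biUnion_le hB s)

theorem exists_hump_of_semivar_eq_top (hμ : IsIMeasure μ) {M : ℝ}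
    (hM : ∀ B : Set Z, MeasurableSet B → ‖μ B‖ ≤ M) {A : Set Z} (hA : semivar μ A = ⊤) :
    ∃ (N : ℕ) (B : ℕ → Set Z) (x : ℕ → E),
      IsHump μ A N B x ∧ semivar μ (A \ ⋃ i ∈ range N, B i) = ⊤ := by
  classical
  obtain ⟨N, B, x, hB, hBA, hBd, hx, hlt⟩ := exists_lt_norm_sum_of_semivar_eq_top hA (1 + M)
  have hM0 : 0 ≤ M := (norm_nonneg _).trans (hM ∅ .empty)
  by_cases hrest : semivar μ (A \ ⋃ i ∈ range N, B i) = ⊤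
  · exact ⟨N, B, x, ⟨hB, hBA, hBd.set_pairwise _, hx, by linarith⟩, hrest⟩
  obtain ⟨i₀, hi₀, htop⟩ := hμ.exists_semivar_eq_top_of_biUnion hB hA hrest
  set B' := update B i₀ ∅
  have hB'B : ∀ i, B' i ⊆ B i := fun i => by
    rcases eq_or_ne i i₀ with rfl | hi
    · simp [B']
    · simp [B', hi]
  have hsum : ∑ i ∈ range N, μ (B' i) (x i) =
      ∑ i ∈ range N, μ (B i) (x i) - μ (B i₀) (x i₀) := by
    simp only [B', apply_update (fun i (S : Set Z) => μ S (x i)), sum_update_of_mem hi₀,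
      hμ.empty, zero_apply, zero_add]
    exact eq_sub_of_add_eq (sum_eq_sum_sdiff_singleton_add hi₀ _).symm
  have hdrop : ‖μ (B i₀) (x i₀)‖ ≤ M :=
    ((μ (B i₀)).le_of_opNorm_le_of_le (hM _ (hB i₀)) (hx i₀)).trans_eq (mul_one M)
  refine ⟨N, B', x, ⟨fun i => ?_, fun i => (hB'B i).trans (hBA i),
    Set.PairwiseDisjoint.mono_on (hBd.set_pairwise _) fun i _ => hB'B i, hx, ?_⟩, ?_⟩
  · rcases eq_or_ne i i₀ with rfl | hi
    · simp [B']
    · simpa [B', hi] using hB i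
  · rw [hsum]
    linarith [norm_sub_norm_le (∑ i ∈ range N, μ (B i) (x i)) (μ (B i₀) (x i₀))]
  · refine top_le_iff.1 (htop ▸ semivar_mono fun z hz => ⟨hBA i₀ hz, ?_⟩)
    simp only [Set.mem_iUnion, not_exists]
    intro i _ hzi
    rcases eq_or_ne i i₀ with rfl | hi
    · simp [B'] at hzi
    · exact (hBd hi).ne_of_mem (hB'B i hzi) hz rfl

end IsIMeasure

end IMeasure

theorem iMeasure_semivar_ne_top_general {Z E F : Type*} [MeasurableSpace Z]
    [NormedAddCommGroup E] [NormedSpace ℝ E]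
    [NormedAddCommGroup F] [NormedSpace ℝ F]
    (μ : Set Z → E →L[ℝ] F) (hμ : IsIMeasure μ) :
    semivar μ Set.univ ≠ ⊤ := by
  obtain ⟨M, hM⟩ := hμ.exists_norm_le
  exact hμ.not_of_exists_hump fun A hA => hμ.exists_hump_of_semivar_eq_top hM hA

/-- Every i-measure has finite total semivariation. -/
theorem iMeasure_semivar_ne_top {Z E F : Type*} [MeasurableSpace Z]
    [NormedAddCommGroup E] [NormedSpace ℝ E]
    [NormedAddCommGroup F] [NormedSpace ℝ F] [CompleteSpace F]
    (μ : Set Z → E →L[ℝ] F) (hμ : IsIMeasure μ) :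
    semivar μ Set.univ ≠ ⊤ :=
  iMeasure_semivar_ne_top_general μ hμ
end

section
/- If μ : 𝓜 → L(E,F) is an i-measure and (Aₙ) is a sequence of pairwise disjoint sets in 𝓜, then the semivariations ‖μ‖_{Aₙ} converge to 0 as n → ∞. -/
open Filter Topology ENNReal

/-- If `(Aₙ)` are pairwise disjoint measurable sets, the semivariations `‖μ‖_{Aₙ}` of an
i-measure tend to `0`. -/
theorem iMeasure_semivar_tendsto_zero {Z E F : Type*} [MeasurableSpace Z]
    [NormedAddCommGroup E] [NormedSpace ℝ E]
    [NormedAddCommGroup F] [NormedSpace ℝ F] [CompleteSpace F]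
    (μ : Set Z → E →L[ℝ] F) (hμ : IsIMeasure μ)
    (A : ℕ → Set Z) (hA : ∀ n, MeasurableSet (A n))
    (hd : Pairwise (Function.onFun Disjoint A)) :
    Tendsto (fun n => semivar μ (A n)) atTop (𝓝 0) := by
  by_contra h
  rw [ENNReal.tendsto_atTop_zero] at h
  push_neg at h
  obtain ⟨ε, hε, hfreq⟩ := h
  set δ : ℝ≥0∞ := min ε 1 with hδdef
  have hδ0 : 0 < δ := lt_min hε zero_lt_one
  have hδtop : δ ≠ ⊤ := ne_top_of_le_ne_top one_ne_top (min_le_right _ _)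
  have hδr : 0 < δ.toReal := ENNReal.toReal_pos hδ0.ne' hδtop
  have hfreq' : ∀ N, ∃ n ≥ N, δ < semivar μ (A n) := by
    intro N
    obtain ⟨n, hn, hlt⟩ := hfreq N
    exact ⟨n, hn, lt_of_le_of_lt (min_le_left _ _) hlt⟩
  obtain ⟨φ, hφ, hφsv⟩ :=
    Filter.extraction_of_frequently_atTop (Filter.frequently_atTop.mpr hfreq')
  -- extract witnesses
  have hwit : ∀ k, ∃ (N : ℕ) (B : ℕ → Set Z) (x : ℕ → E),
      (∀ n, MeasurableSet (B n)) ∧ (∀ n, B n ⊆ A (φ k)) ∧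
      Pairwise (Function.onFun Disjoint B) ∧ (∀ n, ‖x n‖ ≤ 1) ∧
      δ.toReal < ‖∑ n ∈ Finset.range N, μ (B n) (x n)‖ := by
    intro k
    have := hφsv k
    rw [semivar] at this
    simp only [lt_iSup_iff] at this
    obtain ⟨N, B, hm, hs, hdj, x, hx, hlt⟩ := this
    exact ⟨N, B, x, hm, hs, hdj, hx,
      (ENNReal.lt_ofReal_iff_toReal_lt hδtop).mp hlt⟩
  choose N B x hBm hBs hBd hx hsum using hwit
  have hN : ∀ k, 1 ≤ N k := by
    intro k
    rcases Nat.eq_zero_or_pos (N k) with h0 | h1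
    · exfalso
      have := hsum k
      rw [h0] at this
      simp only [Finset.range_zero, Finset.sum_empty, norm_zero] at this
      linarith
    · exact h1
  -- offsets
  set o : ℕ → ℕ := fun k => ∑ i ∈ Finset.range k, N i with ho_def
  have ho_succ : ∀ k, o (k + 1) = o k + N k := fun k => Finset.sum_range_succ N k
  have ho : StrictMono o := by
    apply strictMono_nat_of_lt_succ
    intro k
    rw [ho_succ]
    exact Nat.lt_add_of_pos_right (hN k)
  have hdec : ∀ m, ∃ k, m < o (k + 1) :=
    fun m => ⟨m, lt_of_lt_of_le (Nat.lt_succ_self m) (ho.le_apply)⟩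
  set K : ℕ → ℕ := fun m => Nat.find (hdec m) with hK_def
  have hK_spec : ∀ m, m < o (K m + 1) := fun m => Nat.find_spec (hdec m)
  have hfind : ∀ m, K m = Nat.find (hdec m) := fun _ => rfl
  have hK_le : ∀ m, o (K m) ≤ m := by
    intro m
    by_contra hlt
    push_neg at hlt
    rcases Nat.eq_zero_or_pos (K m) with h0 | hpos
    · rw [h0] at hlt
      simp only [ho_def, Finset.range_zero, Finset.sum_empty] at hlt
      omega
    · have hmin := Nat.find_min (hdec m) (show K m - 1 < Nat.find (hdec m) by
        rw [← hfind m]; omega)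
      have heq : K m - 1 + 1 = K m := by omega
      rw [heq] at hmin
      exact hmin hlt
  have hK_eq : ∀ k j, j < N k → K (o k + j) = k := by
    intro k j hj
    rw [hK_def]
    rw [Nat.find_eq_iff]
    constructor
    · rw [ho_succ]; omega
    · intro k' hk'
      have : o (k' + 1) ≤ o k := ho.monotone hk'
      omega
  set C : ℕ → Set Z := fun m => B (K m) (m - o (K m)) with hC_def
  set y : ℕ → E := fun m => x (K m) (m - o (K m)) with hy_def
  have hCm : ∀ m, MeasurableSet (C m) := fun m => hBm _ _
  have hCd : Pairwise (Function.onFun Disjoint C) := by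
    intro m m' hmm
    by_cases hk : K m = K m'
    · have ho' : o (K m) = o (K m') := by rw [hk]
      have hj : m - o (K m) ≠ m' - o (K m') := by
        intro hje
        apply hmm
        have h1 := hK_le m
        have h2 := hK_le m'
        omega
      simp only [Function.onFun, hC_def]
      rw [hk] at hj ⊢
      exact hBd (K m') hj
    · have : Disjoint (A (φ (K m))) (A (φ (K m'))) :=
        hd (fun hc => hk (hφ.injective hc))
      exact this.mono (hBs _ _) (hBs _ _)
  have hyb : ∀ m, ‖y m‖ ≤ 1 := fun m => hx _ _
  obtain ⟨L, hL⟩ := hμ.2 C hCm hCd y ⟨1, hyb⟩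
  -- block sums
  have hblock : ∀ k, ∑ m ∈ Finset.range (o (k + 1)), μ (C m) (y m)
      - ∑ m ∈ Finset.range (o k), μ (C m) (y m)
      = ∑ j ∈ Finset.range (N k), μ (B k j) (x k j) := by
    intro k
    rw [← Finset.sum_Ico_eq_sub _ (ho.monotone (Nat.le_succ k))]
    rw [Finset.sum_Ico_eq_sum_range]
    have hNn : o (k + 1) - o k = N k := by rw [ho_succ]; omega
    rw [hNn]
    apply Finset.sum_congr rfl
    intro j hj
    rw [Finset.mem_range] at hj
    have hKk := hK_eq k j hj
    simp only [hC_def, hy_def, hKk, Nat.add_sub_cancel_left]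
  have htend0 : Tendsto (fun k => ∑ j ∈ Finset.range (N k), μ (B k j) (x k j))
      atTop (𝓝 0) := by
    have h1 : Tendsto (fun k => ∑ m ∈ Finset.range (o (k + 1)), μ (C m) (y m))
        atTop (𝓝 L) := hL.comp ((ho.tendsto_atTop).comp (tendsto_add_atTop_nat 1))
    have h2 : Tendsto (fun k => ∑ m ∈ Finset.range (o k), μ (C m) (y m))
        atTop (𝓝 L) := hL.comp ho.tendsto_atTop
    have := h1.sub h2
    rw [sub_self] at this
    exact this.congr fun k => hblock k
  have hnorm : Tendsto (fun k => ‖∑ j ∈ Finset.range (N k), μ (B k j) (x k j)‖)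
      atTop (𝓝 0) := by
    simpa using htend0.norm
  have hev := hnorm.eventually_lt_const hδr
  obtain ⟨k, hk⟩ := hev.exists
  exact absurd (hsum k) (not_lt.mpr hk.le)
end

section
/- The space of i-measures 𝓜 → L(E,F) with pointwise algebraic operations and the total semivariation as norm is a Banach space; i.e., every Cauchy sequence of i-measures in the total semivariation norm converges to an i-measure. -/
open Filter Topology ENNReal

section Aux

variable {Z E F : Type*} [MeasurableSpace Z]
  [NormedAddCommGroup E] [NormedSpace ℝ E] [NormedAddCommGroup F] [NormedSpace ℝ F]

lemma ofReal_sum_le_semivar (f : Set Z → E →L[ℝ] F) (N : ℕ) (B : ℕ → Set Z)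
    (hB : ∀ n, MeasurableSet (B n)) (hd : Pairwise (Function.onFun Disjoint B))
    (x : ℕ → E) (hx : ∀ n, ‖x n‖ ≤ 1) :
    ENNReal.ofReal ‖∑ n ∈ Finset.range N, f (B n) (x n)‖ ≤ semivar f Set.univ := by
  unfold semivar
  refine le_iSup_of_le N ?_
  refine le_iSup_of_le B ?_
  refine le_iSup_of_le hB ?_
  refine le_iSup_of_le (fun n => Set.subset_univ _) ?_
  refine le_iSup_of_le hd ?_
  refine le_iSup_of_le x ?_
  exact le_iSup_of_le hx le_rfl

lemma sum_le_of_semivar_le {f : Set Z → E →L[ℝ] F} {ε : ℝ} (hε : 0 ≤ ε)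
    (hf : semivar f Set.univ ≤ ENNReal.ofReal ε) (N : ℕ) {B : ℕ → Set Z}
    (hB : ∀ n, MeasurableSet (B n)) (hd : Pairwise (Function.onFun Disjoint B))
    {C : ℝ} (hC : 0 < C) {x : ℕ → E} (hx : ∀ n, ‖x n‖ ≤ C) :
    ‖∑ n ∈ Finset.range N, f (B n) (x n)‖ ≤ C * ε := by
  have h1 : ∀ n, ‖C⁻¹ • x n‖ ≤ 1 := by
    intro n
    rw [norm_smul, norm_inv, Real.norm_of_nonneg hC.le]
    calc C⁻¹ * ‖x n‖ ≤ C⁻¹ * C := by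
          exact mul_le_mul_of_nonneg_left (hx n) (inv_nonneg.2 hC.le)
      _ = 1 := inv_mul_cancel₀ hC.ne'
  have h4 : ‖∑ n ∈ Finset.range N, f (B n) (C⁻¹ • x n)‖ ≤ ε :=
    (ENNReal.ofReal_le_ofReal_iff hε).1
      ((ofReal_sum_le_semivar f N B hB hd _ h1).trans hf)
  have h5 : ∑ n ∈ Finset.range N, f (B n) (C⁻¹ • x n)
      = C⁻¹ • ∑ n ∈ Finset.range N, f (B n) (x n) := by
    rw [Finset.smul_sum]
    exact Finset.sum_congr rfl fun n _ => (f (B n)).map_smul _ _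
  rw [h5, norm_smul, norm_inv, Real.norm_of_nonneg hC.le] at h4
  have h6 := mul_le_mul_of_nonneg_left h4 hC.le
  rwa [← mul_assoc, mul_inv_cancel₀ hC.ne', one_mul] at h6

lemma apply_le_of_semivar_le {f : Set Z → E →L[ℝ] F} {ε : ℝ} (hε : 0 ≤ ε)
    (hf : semivar f Set.univ ≤ ENNReal.ofReal ε) {A : Set Z} (hA : MeasurableSet A)
    {C : ℝ} (hC : 0 < C) {v : E} (hv : ‖v‖ ≤ C) : ‖f A v‖ ≤ C * ε := by
  have hmeas : ∀ n : ℕ, MeasurableSet (if n = 0 then A else (∅ : Set Z)) := by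
    intro n; split <;> simp [hA]
  have hdisj : Pairwise (Function.onFun Disjoint fun n : ℕ => if n = 0 then A else (∅ : Set Z)) := by
    intro i j hij
    simp only [Function.onFun]
    rcases eq_or_ne i 0 with rfl | hi
    · simp [Ne.symm hij]
    · simp [hi]
  have := sum_le_of_semivar_le hε hf 1 hmeas hdisj hC (x := fun _ => v) (fun _ => hv)
  simpa using this

lemma dist_sums_le {f g : Set Z → E →L[ℝ] F} {ε : ℝ} (hε : 0 ≤ ε)
    (h : semivar (fun A => f A - g A) Set.univ ≤ ENNReal.ofReal ε)
    {B : ℕ → Set Z} (hB : ∀ n, MeasurableSet (B n)) (hd : Pairwise (Function.onFun Disjoint B))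
    {C : ℝ} (hC : 0 < C) {x : ℕ → E} (hx : ∀ n, ‖x n‖ ≤ C) (N : ℕ) :
    dist (∑ n ∈ Finset.range N, f (B n) (x n)) (∑ n ∈ Finset.range N, g (B n) (x n)) ≤ C * ε := by
  have h1 := sum_le_of_semivar_le hε h N hB hd hC hx
  rw [dist_eq_norm, ← Finset.sum_sub_distrib]
  simpa [ContinuousLinearMap.sub_apply] using h1

end Aux

/-- The space of i-measures with the total semivariation norm is complete: every Cauchy
sequence of i-measures converges, in total semivariation, to an i-measure. -/
theorem iMeasure_complete {Z E F : Type*} [MeasurableSpace Z]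
    [NormedAddCommGroup E] [NormedSpace ℝ E]
    [NormedAddCommGroup F] [NormedSpace ℝ F] [CompleteSpace F]
    (μ : ℕ → Set Z → E →L[ℝ] F) (hμ : ∀ n, IsIMeasure (μ n))
    (hC : ∀ ε : ℝ≥0∞, 0 < ε → ∃ N : ℕ, ∀ m ≥ N, ∀ n ≥ N,
      semivar (fun A => μ m A - μ n A) Set.univ ≤ ε) :
    ∃ ν : Set Z → E →L[ℝ] F, IsIMeasure ν ∧
      Tendsto (fun n => semivar (fun A => μ n A - ν A) Set.univ) atTop (𝓝 0) := by
  have hC' : ∀ δ : ℝ, 0 < δ → ∃ N, ∀ m ≥ N, ∀ n ≥ N,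
      semivar (fun A => μ m A - μ n A) Set.univ ≤ ENNReal.ofReal δ :=
    fun δ hδ => hC _ (ENNReal.ofReal_pos.2 hδ)
  -- (μ n A) is a Cauchy sequence of operators for measurable A
  have hcauchy : ∀ A : Set Z, MeasurableSet A → CauchySeq (fun n => μ n A) := by
    intro A hA
    rw [Metric.cauchySeq_iff]
    intro ε hε
    obtain ⟨N, hN⟩ := hC' (ε / 2) (by linarith)
    refine ⟨N, fun m hm n hn => lt_of_le_of_lt ?_ (by linarith : ε / 2 < ε)⟩
    rw [dist_eq_norm]
    have hop : ‖(fun A => μ m A - μ n A) A‖ ≤ ε / 2 := by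
      refine ContinuousLinearMap.opNorm_le_bound _ (by linarith) fun v => ?_
      rcases eq_or_ne v 0 with rfl | hv
      · simp
      · have hnv : (0 : ℝ) < ‖v‖ := norm_pos_iff.2 hv
        have := apply_le_of_semivar_le (by linarith : (0:ℝ) ≤ ε / 2) (hN m hm n hn) hA hnv le_rfl
        linarith [this]
    exact hop
  set ν : Set Z → E →L[ℝ] F := fun A => limUnder atTop fun n => μ n A with hνdef
  have hν : ∀ A : Set Z, MeasurableSet A → Tendsto (fun n => μ n A) atTop (𝓝 (ν A)) :=
    fun A hA => (hcauchy A hA).tendsto_limUnder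
  -- the key uniform estimate
  have hsem : ∀ δ : ℝ, 0 < δ → ∃ N, ∀ m ≥ N,
      semivar (fun A => μ m A - ν A) Set.univ ≤ ENNReal.ofReal δ := by
    intro δ hδ
    obtain ⟨N, hN⟩ := hC' δ hδ
    refine ⟨N, fun m hm => ?_⟩
    unfold semivar
    refine iSup_le fun N' => iSup_le fun B => iSup_le fun hB => iSup_le fun _ =>
      iSup_le fun hd => iSup_le fun x => iSup_le fun hx => ?_
    refine ENNReal.ofReal_le_ofReal ?_
    have hlim : Tendsto (fun n => ∑ k ∈ Finset.range N', (μ m (B k) - μ n (B k)) (x k)) atTop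
        (𝓝 (∑ k ∈ Finset.range N', (μ m (B k) - ν (B k)) (x k))) := by
      refine tendsto_finset_sum _ fun k _ => ?_
      simp only [ContinuousLinearMap.sub_apply]
      exact tendsto_const_nhds.sub
        (((ContinuousLinearMap.apply ℝ F (x k)).continuous.tendsto _).comp (hν (B k) (hB k)))
    refine le_of_tendsto hlim.norm (Filter.eventually_atTop.2 ⟨N, fun n hn => ?_⟩)
    have := sum_le_of_semivar_le hδ.le (hN m hm n hn) N' hB hd one_pos hx
    simpa using this
  refine ⟨ν, ⟨?_, ?_⟩, ?_⟩
  · -- countable additivity in SOT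
    intro A hA hd x
    rw [Metric.tendsto_atTop]
    intro ε hε
    have hCxpos : (0 : ℝ) < ‖x‖ + 1 := by positivity
    set Cx : ℝ := ‖x‖ + 1 with hCxdef
    set δ : ℝ := ε / (4 * Cx) with hδdef
    have hδ : 0 < δ := div_pos hε (by positivity)
    obtain ⟨M, hM⟩ := hsem δ hδ
    have hsm := hM M le_rfl
    have hxC : ∀ n : ℕ, ‖(fun _ : ℕ => x) n‖ ≤ Cx := fun n => by
      simp only [hCxdef]; linarith [norm_nonneg x]
    have htend := (hμ M).1 A hA hd x
    rw [Metric.tendsto_atTop] at htend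
    obtain ⟨N0, hN0⟩ := htend δ hδ
    refine ⟨N0, fun N hN => ?_⟩
    have h1 : dist (∑ n ∈ Finset.range N, μ M (A n) x) (∑ n ∈ Finset.range N, ν (A n) x)
        ≤ Cx * δ := dist_sums_le hδ.le hsm hA hd hCxpos hxC N
    have h2 := hN0 N hN
    have h3 : dist (μ M (⋃ n, A n) x) (ν (⋃ n, A n) x) ≤ Cx * δ := by
      rw [dist_eq_norm]
      have := apply_le_of_semivar_le hδ.le hsm (MeasurableSet.iUnion hA) hCxpos
        (by linarith [norm_nonneg x] : ‖x‖ ≤ Cx)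
      simpa [ContinuousLinearMap.sub_apply] using this
    have hCxδ : Cx * δ = ε / 4 := by
      rw [hδdef]; field_simp
    have hδ4 : δ ≤ ε / 4 := by
      rw [← hCxδ]
      exact le_mul_of_one_le_left hδ.le (by linarith [norm_nonneg x] : (1:ℝ) ≤ Cx)
    clear_value Cx δ
    calc dist (∑ n ∈ Finset.range N, ν (A n) x) (ν (⋃ n, A n) x)
        ≤ dist (∑ n ∈ Finset.range N, ν (A n) x) (∑ n ∈ Finset.range N, μ M (A n) x)
          + dist (∑ n ∈ Finset.range N, μ M (A n) x) (μ M (⋃ n, A n) x)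
          + dist (μ M (⋃ n, A n) x) (ν (⋃ n, A n) x) := dist_triangle4 _ _ _ _
      _ < ε := by
          rw [dist_comm (∑ n ∈ Finset.range N, ν (A n) x)]
          linarith
  · -- independent convergence
    rintro A hA hd x ⟨C, hx⟩
    have hC1 : (0 : ℝ) < max C 1 := lt_of_lt_of_le one_pos (le_max_right _ _)
    have hx' : ∀ n, ‖x n‖ ≤ max C 1 := fun n => (hx n).trans (le_max_left _ _)
    suffices h : CauchySeq (fun N => ∑ n ∈ Finset.range N, ν (A n) (x n)) by
      exact cauchySeq_tendsto_of_complete h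
    rw [Metric.cauchySeq_iff']
    intro ε hε
    set δ : ℝ := ε / (4 * max C 1) with hδdef
    have hδ : 0 < δ := div_pos hε (by positivity)
    obtain ⟨M, hM⟩ := hsem δ hδ
    have hsm := hM M le_rfl
    obtain ⟨y, hy⟩ := (hμ M).2 A hA hd x ⟨C, hx⟩
    have hy' : Tendsto (fun N => ∑ n ∈ Finset.range N, μ M (A n) (x n)) atTop (𝓝 y) := hy
    have hTC := hy'.cauchySeq
    rw [Metric.cauchySeq_iff'] at hTC
    obtain ⟨N0, hN0⟩ := hTC δ hδ
    refine ⟨N0, fun N hN => ?_⟩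
    have h1 : dist (∑ n ∈ Finset.range N, μ M (A n) (x n)) (∑ n ∈ Finset.range N, ν (A n) (x n))
        ≤ max C 1 * δ := dist_sums_le hδ.le hsm hA hd hC1 hx' N
    have h1' : dist (∑ n ∈ Finset.range N0, μ M (A n) (x n)) (∑ n ∈ Finset.range N0, ν (A n) (x n))
        ≤ max C 1 * δ := dist_sums_le hδ.le hsm hA hd hC1 hx' N0
    have h2 := hN0 N hN
    have hCδ : max C 1 * δ = ε / 4 := by
      rw [hδdef]; field_simp
    calc dist (∑ n ∈ Finset.range N, ν (A n) (x n)) (∑ n ∈ Finset.range N0, ν (A n) (x n))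
        ≤ dist (∑ n ∈ Finset.range N, ν (A n) (x n)) (∑ n ∈ Finset.range N, μ M (A n) (x n))
          + dist (∑ n ∈ Finset.range N, μ M (A n) (x n)) (∑ n ∈ Finset.range N0, μ M (A n) (x n))
          + dist (∑ n ∈ Finset.range N0, μ M (A n) (x n)) (∑ n ∈ Finset.range N0, ν (A n) (x n))
        := dist_triangle4 _ _ _ _
      _ < ε := by
          rw [dist_comm (∑ n ∈ Finset.range N, ν (A n) (x n))]
          have hδ4 : δ ≤ ε / 4 := by
            rw [← hCδ]
            exact le_mul_of_one_le_left hδ.le (le_max_right _ _)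
          linarith
  · -- convergence in semivariation
    rw [ENNReal.tendsto_nhds_zero]
    intro ε hε
    have hne : min ε 1 ≠ ⊤ := ne_top_of_le_ne_top ENNReal.one_ne_top (min_le_right _ _)
    have hδpos : 0 < (min ε 1).toReal :=
      ENNReal.toReal_pos (lt_min hε zero_lt_one).ne' hne
    obtain ⟨N, hN⟩ := hsem _ hδpos
    rw [eventually_atTop]
    exact ⟨N, fun n hn => (hN n hn).trans
      (by rw [ENNReal.ofReal_toReal hne]; exact min_le_left _ _)⟩
end

section
/- Every weak* i-measure μ : 𝓜 → L(E,F*) has finite total semivariation. -/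
/-!
Fix `f ∈ F`; then `ν = ⟨f, μ(·)⟩` is an `E*`-valued i-measure. Testing the independent
convergence of `∑ ν(Aₙ)` against unit vectors `xₙ` with `ν(Aₙ) xₙ ≥ ‖ν(Aₙ)‖ / 2` shows that
`∑ ‖ν(Aₙ)‖ < ∞` for every disjoint sequence `(Aₙ)`. This forces `ν` to have finite variation:
otherwise, since splitting a set of infinite variation leaves a piece of infinite variation, one can
repeatedly carve out of such a set a finite disjoint family with `∑ ‖ν‖ ≥ 1` whose complement still
has infinite variation, and all these families together form a disjoint sequence with
`∑ ‖ν‖ = ∞`. Hence the functionals `∑ μ(Bₙ) xₙ ∈ F*` are pointwise bounded on `F`, and the uniform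
boundedness principle bounds their norms.
-/

open Filter Topology ENNReal

/-- A *weak\* i-measure* is an `L(E,F*)`-valued set function `μ` such that for every
`f ∈ F` the `E*`-valued set function `A ↦ ⟨f, μ(A)(·)⟩` is an i-measure. -/
def IsWeakStarIMeasure {Z E F : Type*} [MeasurableSpace Z]
    [NormedAddCommGroup E] [NormedSpace ℝ E] [NormedAddCommGroup F] [NormedSpace ℝ F]
    (μ : Set Z → E →L[ℝ] StrongDual ℝ F) : Prop :=
  ∀ f : F, IsIMeasure fun A => (μ A).flip f

open Function

section

variable {Z E F : Type*} [MeasurableSpace Z] [NormedAddCommGroup E] [NormedSpace ℝ E]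
  [NormedAddCommGroup F] [NormedSpace ℝ F] {ν : Set Z → E →L[ℝ] F}

theorem IsIMeasure.apply_empty (hν : IsIMeasure ν) : ν ∅ = 0 := by
  ext x
  have hsum := hν.1 (fun _ => ∅) (fun _ => .empty) (fun _ _ _ => disjoint_bot_left) x
  rw [Set.iUnion_empty] at hsum
  have hdiff := (hsum.comp (tendsto_add_atTop_nat 1)).sub hsum
  simp only [comp_apply, Finset.sum_range_succ, add_sub_cancel_left, sub_self] at hdiff
  exact tendsto_nhds_unique tendsto_const_nhds hdiff

theorem IsIMeasure.apply_union (hν : IsIMeasure ν) {B C : Set Z} (hB : MeasurableSet B)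
    (hC : MeasurableSet C) (hBC : Disjoint B C) : ν (B ∪ C) = ν B + ν C := by
  ext x
  let A : ℕ → Set Z := fun | 0 => B | 1 => C | _ + 2 => ∅
  have hAm : ∀ n, MeasurableSet (A n) := fun | 0 => hB | 1 => hC | _ + 2 => .empty
  have hAd : Pairwise (Disjoint on A) := by
    rintro (_ | _ | i) (_ | _ | j) hij <;> simp_all [onFun, A, hBC.symm]
  have hA : ⋃ n, A n = B ∪ C := by
    rw [← Set.union_iUnion_nat_succ, ← Set.union_iUnion_nat_succ]
    simp [A]
  have hpartial : ∀ N, ∑ n ∈ Finset.range (N + 2), ν (A n) x = ν B x + ν C x := by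
    intro N
    simp [Finset.sum_range_succ', A, hν.apply_empty, add_comm]
  have hsum := (hν.1 A hAm hAd x).comp (tendsto_add_atTop_nat 2)
  rw [hA] at hsum
  exact tendsto_nhds_unique hsum
    (by simpa only [comp_def, hpartial, add_apply] using tendsto_const_nhds)

theorem IsIMeasure.apply_eq_inter_add_diff (hν : IsIMeasure ν) {A B : Set Z}
    (hA : MeasurableSet A) (hB : MeasurableSet B) : ν A = ν (A ∩ B) + ν (A \ B) := by
  rw [← hν.apply_union (hA.inter hB) (hA.diff hB) Set.disjoint_sdiff_inter.symm,
    Set.inter_union_sdiff]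

def IsDisjointFamilyIn (A : Set Z) (s : Finset ℕ) (C : ℕ → Set Z) : Prop :=
  (∀ n ∈ s, MeasurableSet (C n) ∧ C n ⊆ A) ∧ (s : Set ℕ).PairwiseDisjoint C

/-- `|ν|(A) = ∞` for the variation `|ν|` of `ν`. -/
def UnboundedVariationOn (ν : Set Z → E →L[ℝ] F) (A : Set Z) : Prop :=
  ∀ M : ℝ, ∃ (s : Finset ℕ) (C : ℕ → Set Z), IsDisjointFamilyIn A s C ∧
    M ≤ ∑ n ∈ s, ‖ν (C n)‖

theorem UnboundedVariationOn.mono {A B : Set Z} (h : UnboundedVariationOn ν A) (hAB : A ⊆ B) :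
    UnboundedVariationOn ν B := by
  intro M
  obtain ⟨s, C, ⟨hC, hd⟩, hM⟩ := h M
  exact ⟨s, C, ⟨fun n hn => ⟨(hC n hn).1, (hC n hn).2.trans hAB⟩, hd⟩, hM⟩

theorem IsIMeasure.unboundedVariationOn_inter_or_diff (hν : IsIMeasure ν) {A B : Set Z}
    (hB : MeasurableSet B) (h : UnboundedVariationOn ν A) :
    UnboundedVariationOn ν (A ∩ B) ∨ UnboundedVariationOn ν (A \ B) := by
  by_contra! hbdd
  simp only [UnboundedVariationOn, not_forall, not_exists, not_and, not_le] at hbdd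
  obtain ⟨⟨M₁, hM₁⟩, ⟨M₂, hM₂⟩⟩ := hbdd
  obtain ⟨s, C, ⟨hC, hd⟩, hM⟩ := h (M₁ + M₂)
  have hinter := hM₁ s (fun n => C n ∩ B)
    ⟨fun n hn => ⟨(hC n hn).1.inter hB, Set.inter_subset_inter_left B (hC n hn).2⟩,
      hd.mono fun _ => Set.inter_subset_left⟩
  have hdiff := hM₂ s (fun n => C n \ B)
    ⟨fun n hn => ⟨(hC n hn).1.diff hB, Set.sdiff_subset_sdiff_left (hC n hn).2⟩,
      hd.mono fun _ => Set.sdiff_subset⟩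
  have hsplit : ∑ n ∈ s, ‖ν (C n)‖ ≤ ∑ n ∈ s, ‖ν (C n ∩ B)‖ + ∑ n ∈ s, ‖ν (C n \ B)‖ := by
    rw [← Finset.sum_add_distrib]
    refine Finset.sum_le_sum fun n hn => ?_
    rw [hν.apply_eq_inter_add_diff (hC n hn).1 hB]
    exact norm_add_le _ _
  linarith

theorem IsIMeasure.unboundedVariationOn_diff_or_inter (hν : IsIMeasure ν) {A : Set Z}
    {s : Finset ℕ} {C : ℕ → Set Z} (hC : ∀ n ∈ s, MeasurableSet (C n))
    (h : UnboundedVariationOn ν A) :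
    UnboundedVariationOn ν (A \ ⋃ n ∈ s, C n) ∨ ∃ k ∈ s, UnboundedVariationOn ν (A ∩ C k) := by
  classical
  induction s using Finset.induction_on with
  | empty => simpa using h
  | insert a s ha ih =>
    rcases ih fun n hn => hC n (Finset.mem_insert_of_mem hn) with hrest | ⟨k, hk, hCk⟩
    · rcases hν.unboundedVariationOn_inter_or_diff (hC a (Finset.mem_insert_self a s)) hrest
        with hCa | hrest'
      · exact .inr ⟨a, Finset.mem_insert_self a s, hCa.mono (Set.inter_subset_inter_left _
          Set.sdiff_subset)⟩
      · left
        rwa [Finset.set_biUnion_insert, Set.union_comm, ← Set.sdiff_sdiff]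
    · exact .inr ⟨k, Finset.mem_insert_of_mem hk, hCk⟩

theorem exists_singleton_family_of_unboundedVariationOn_diff {A T : Set Z} {M : ℝ}
    (hTA : T ⊆ A) (hT : MeasurableSet T) (hM : M ≤ ‖ν T‖) (h : UnboundedVariationOn ν (A \ T)) :
    ∃ (s : Finset ℕ) (C : ℕ → Set Z), IsDisjointFamilyIn A s C ∧ M ≤ ∑ n ∈ s, ‖ν (C n)‖ ∧
      UnboundedVariationOn ν (A \ ⋃ n ∈ s, C n) :=
  ⟨{0}, fun _ => T, ⟨by simpa using ⟨hT, hTA⟩, by simp⟩, by simpa,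
    by simpa using h⟩

theorem IsIMeasure.exists_family_of_forall_norm_le (hν : IsIMeasure ν) {A : Set Z}
    (h : UnboundedVariationOn ν A) {S : ℝ} (hS : ∀ T ⊆ A, MeasurableSet T → ‖ν T‖ ≤ S)
    (M : ℝ) :
    ∃ (s : Finset ℕ) (C : ℕ → Set Z), IsDisjointFamilyIn A s C ∧ M ≤ ∑ n ∈ s, ‖ν (C n)‖ ∧
      UnboundedVariationOn ν (A \ ⋃ n ∈ s, C n) := by
  obtain ⟨s, C, ⟨hC, hd⟩, hsum⟩ := h (M + S)
  rcases hν.unboundedVariationOn_diff_or_inter (fun n hn => (hC n hn).1) h with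
    hrest | ⟨k, hk, hCk⟩
  · have hS₀ : 0 ≤ S := (norm_nonneg _).trans (hS ∅ (Set.empty_subset A) .empty)
    exact ⟨s, C, ⟨hC, hd⟩, by linarith, hrest⟩
  -- discarding `C k` costs at most `S` and leaves `A ∩ C k` in the remainder
  refine ⟨s.erase k, C, ⟨fun n hn => hC n (Finset.mem_of_mem_erase hn),
    hd.subset (Finset.coe_subset.2 (s.erase_subset k))⟩, ?_, hCk.mono ?_⟩
  · have := Finset.add_sum_erase s (fun n => ‖ν (C n)‖) hk
    have := hS (C k) (hC k hk).2 (hC k hk).1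
    linarith
  · rintro z ⟨hzA, hzC⟩
    refine ⟨hzA, ?_⟩
    simp only [Set.mem_iUnion]
    rintro ⟨n, hn, hzn⟩
    exact Set.disjoint_left.1
      (hd hk (Finset.mem_of_mem_erase hn) (Finset.ne_of_mem_erase hn).symm) hzC hzn

theorem IsIMeasure.exists_family_of_le_norm (hν : IsIMeasure ν) {A T : Set Z}
    (hA : MeasurableSet A) (h : UnboundedVariationOn ν A) (hTA : T ⊆ A) (hT : MeasurableSet T)
    {M : ℝ} (hM : M + ‖ν A‖ ≤ ‖ν T‖) :
    ∃ (s : Finset ℕ) (C : ℕ → Set Z), IsDisjointFamilyIn A s C ∧ M ≤ ∑ n ∈ s, ‖ν (C n)‖ ∧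
      UnboundedVariationOn ν (A \ ⋃ n ∈ s, C n) := by
  have hdiff : M ≤ ‖ν (A \ T)‖ := by
    have hdiff_eq : ν (A \ T) = ν A - ν T := by
      rw [hν.apply_eq_inter_add_diff hA hT, Set.inter_eq_right.2 hTA]; abel
    have := norm_sub_norm_le (ν T) (ν A)
    rw [norm_sub_rev, ← hdiff_eq] at this
    linarith
  -- `T` and `A \ T` both have norm `≥ M`: take the one whose complement has unbounded variation
  rcases hν.unboundedVariationOn_inter_or_diff hT h with hAT | hAT
  · refine exists_singleton_family_of_unboundedVariationOn_diff Set.sdiff_subset (hA.diff hT)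
      hdiff ?_
    rwa [Set.sdiff_sdiff_right_self]
  · exact exists_singleton_family_of_unboundedVariationOn_diff hTA hT
      (by linarith [norm_nonneg (ν A)]) hAT

theorem IsIMeasure.exists_family_unboundedVariationOn_diff (hν : IsIMeasure ν) {A : Set Z}
    (hA : MeasurableSet A) (h : UnboundedVariationOn ν A) (M : ℝ) :
    ∃ (s : Finset ℕ) (C : ℕ → Set Z), IsDisjointFamilyIn A s C ∧ M ≤ ∑ n ∈ s, ‖ν (C n)‖ ∧
      UnboundedVariationOn ν (A \ ⋃ n ∈ s, C n) := by
  by_cases hbdd : ∃ S, ∀ T ⊆ A, MeasurableSet T → ‖ν T‖ ≤ S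
  · obtain ⟨S, hS⟩ := hbdd
    exact hν.exists_family_of_forall_norm_le h hS M
  · push Not at hbdd
    obtain ⟨T, hTA, hT, hlarge⟩ := hbdd (M + ‖ν A‖)
    exact hν.exists_family_of_le_norm hA h hTA hT hlarge.le

theorem IsIMeasure.exists_pairwise_disjoint_rows (hν : IsIMeasure ν)
    (h : UnboundedVariationOn ν Set.univ) :
    ∃ H : ℕ × ℕ → Set Z, (∀ p, MeasurableSet (H p)) ∧ Pairwise (Disjoint on H) ∧
      ∀ k, ∃ s : Finset ℕ, 1 ≤ ∑ n ∈ s, ‖ν (H (k, n))‖ := by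
  classical
  let P := {A : Set Z // MeasurableSet A ∧ UnboundedVariationOn ν A}
  choose s C hC hsum hrest using
    fun A : P => hν.exists_family_unboundedVariationOn_diff A.2.1 A.2.2 1
  let next : P → P := fun A => ⟨A.1 \ ⋃ n ∈ s A, C A n,
    A.2.1.diff (Finset.measurableSet_biUnion _ fun n hn => ((hC A).1 n hn).1), hrest A⟩
  let A : ℕ → P := fun k => next^[k] ⟨Set.univ, .univ, h⟩
  have hA : ∀ k, A (k + 1) = next (A k) := fun k => iterate_succ_apply' next k _
  have hanti : Antitone fun k => (A k).1 :=
    antitone_nat_of_succ_le fun k => by rw [hA]; exact Set.sdiff_subset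
  -- row `k` is the family carved out of `A k`, padded with `∅`; it lies in `A k \ A (k + 1)`
  let H : ℕ × ℕ → Set Z := fun p => if p.2 ∈ s (A p.1) then C (A p.1) p.2 else ∅
  have hHA : ∀ k n, H (k, n) ⊆ (A k).1 := by
    intro k n
    by_cases hn : n ∈ s (A k)
    · simpa [H, hn] using ((hC (A k)).1 n hn).2
    · simp [H, hn]
  have hHnext : ∀ k n, Disjoint (H (k, n)) (A (k + 1)).1 := by
    intro k n
    rw [hA]
    by_cases hn : n ∈ s (A k)
    · simp only [H, hn, if_true]
      exact Set.disjoint_sdiff_right.mono_left (Set.subset_biUnion_of_mem (u := C (A k)) hn)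
    · simp [H, hn]
  refine ⟨H, fun p => ?_, ?_, fun k => ⟨s (A k), ?_⟩⟩
  · by_cases hn : p.2 ∈ s (A p.1)
    · simpa [H, hn] using ((hC (A p.1)).1 p.2 hn).1
    · simp [H, hn]
  · rintro ⟨k, n⟩ ⟨k', n'⟩ hne
    rcases lt_trichotomy k k' with hk | rfl | hk
    · exact (hHnext k n).mono_right ((hHA k' n').trans (hanti hk))
    · have hnn' : n ≠ n' := fun h => hne (h ▸ rfl)
      simp only [onFun, H]
      split_ifs with hn hn'
      · exact (hC (A k)).2 hn hn' hnn'
      all_goals simp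
    · exact ((hHnext k' n').mono_right ((hHA k n).trans (hanti hk))).symm
  · exact (hsum (A k)).trans_eq (Finset.sum_congr rfl fun n hn => by simp [H, hn])

theorem exists_norm_sum_apply_le_of_not_unboundedVariationOn
    (h : ¬ UnboundedVariationOn ν Set.univ) :
    ∃ M : ℝ, ∀ (N : ℕ) (B : ℕ → Set Z) (x : ℕ → E), (∀ n, MeasurableSet (B n)) →
      Pairwise (Disjoint on B) → (∀ n, ‖x n‖ ≤ 1) →
      ‖∑ n ∈ Finset.range N, ν (B n) (x n)‖ ≤ M := by
  simp only [UnboundedVariationOn, not_forall, not_exists, not_and, not_le] at h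
  obtain ⟨M, hM⟩ := h
  refine ⟨M, fun N B x hB hd hx => ?_⟩
  calc ‖∑ n ∈ Finset.range N, ν (B n) (x n)‖ ≤ ∑ n ∈ Finset.range N, ‖ν (B n)‖ :=
        norm_sum_le_of_le _ fun n _ => (ν (B n)).unit_le_opNorm _ (hx n)
    _ ≤ M := (hM _ B ⟨fun n _ => ⟨hB n, Set.subset_univ _⟩, hd.set_pairwise _⟩).le

theorem semivar_ne_top_of_norm_sum_apply_le {A : Set Z} (C : ℝ)
    (h : ∀ (N : ℕ) (B : ℕ → Set Z) (x : ℕ → E), (∀ n, MeasurableSet (B n)) →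
      Pairwise (Disjoint on B) → (∀ n, ‖x n‖ ≤ 1) →
      ‖∑ n ∈ Finset.range N, ν (B n) (x n)‖ ≤ C) :
    semivar ν A ≠ ⊤ :=
  ne_top_of_le_ne_top ofReal_ne_top <| iSup_le fun N => iSup₂_le fun B hB => iSup₂_le
    fun _ hd => iSup₂_le fun x hx => ofReal_le_ofReal (h N B x hB hd hx)

end

section

variable {Z E : Type*} [MeasurableSpace Z] [NormedAddCommGroup E] [NormedSpace ℝ E]
  {ν : Set Z → E →L[ℝ] ℝ}

theorem ContinuousLinearMap.exists_norm_le_one_half_opNorm_le_apply (T : E →L[ℝ] ℝ) :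
    ∃ x : E, ‖x‖ ≤ 1 ∧ ‖T‖ / 2 ≤ T x := by
  rcases (norm_nonneg T).eq_or_lt with hT | hT
  · exact ⟨0, by simp, by simp [← hT]⟩
  obtain ⟨x, hx, hTx⟩ := T.exists_lt_apply_of_lt_opNorm (half_lt_self hT)
  rcases le_or_gt 0 (T x) with hpos | hneg
  · exact ⟨x, hx.le, by rw [Real.norm_of_nonneg hpos] at hTx; exact hTx.le⟩
  · refine ⟨-x, by simpa using hx.le, ?_⟩
    rw [Real.norm_of_nonpos hneg.le] at hTx
    simpa using hTx.le

theorem IsIMeasure.summable_norm_apply (hν : IsIMeasure ν) {A : ℕ → Set Z}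
    (hA : ∀ n, MeasurableSet (A n)) (hd : Pairwise (Disjoint on A)) :
    Summable fun n => ‖ν (A n)‖ := by
  choose x hx hνx using fun n => (ν (A n)).exists_norm_le_one_half_opNorm_le_apply
  have hnonneg : ∀ n, 0 ≤ ν (A n) (x n) :=
    fun n => (div_nonneg (norm_nonneg _) zero_le_two).trans (hνx n)
  obtain ⟨y, hy⟩ := hν.2 A hA hd x ⟨1, hx⟩
  have hsummable : Summable fun n => ν (A n) (x n) :=
    ⟨y, (hasSum_iff_tendsto_nat_of_nonneg hnonneg y).2 hy⟩
  exact (hsummable.mul_left 2).of_nonneg_of_le (fun n => norm_nonneg _)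
    fun n => by linarith [hνx n]

theorem IsIMeasure.not_unboundedVariationOn_univ (hν : IsIMeasure ν) :
    ¬ UnboundedVariationOn ν Set.univ := by
  intro h
  obtain ⟨H, hHm, hHd, hrow⟩ := hν.exists_pairwise_disjoint_rows h
  have hH : Summable fun p => ‖ν (H p)‖ :=
    Nat.pairEquiv.symm.summable_iff.1 <| hν.summable_norm_apply (fun m => hHm _)
      (hHd.comp_of_injective Nat.pairEquiv.symm.injective)
  obtain ⟨hrows, hsum⟩ := (summable_prod_of_nonneg fun _ => norm_nonneg _).1 hH
  obtain ⟨k, hk⟩ := (hsum.tendsto_atTop_zero.eventually (gt_mem_nhds one_pos)).exists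
  obtain ⟨s, hs⟩ := hrow k
  exact (hs.trans ((hrows k).sum_le_tsum s fun n _ => norm_nonneg _)).not_gt hk

end

/-- Every weak* i-measure has finite total semivariation. -/
theorem weakStarIMeasure_semivar_ne_top {Z E F : Type*} [MeasurableSpace Z]
    [NormedAddCommGroup E] [NormedSpace ℝ E]
    [NormedAddCommGroup F] [NormedSpace ℝ F] [CompleteSpace F]
    (μ : Set Z → E →L[ℝ] StrongDual ℝ F) (hμ : IsWeakStarIMeasure μ) :
    semivar μ Set.univ ≠ ⊤ := by
  let ι := {p : ℕ × (ℕ → Set Z) × (ℕ → E) // (∀ n, MeasurableSet (p.2.1 n)) ∧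
    Pairwise (Disjoint on p.2.1) ∧ ∀ n, ‖p.2.2 n‖ ≤ 1}
  let g : ι → StrongDual ℝ F := fun p => ∑ n ∈ Finset.range p.1.1, μ (p.1.2.1 n) (p.1.2.2 n)
  have hg : ∀ f : F, ∃ M, ∀ i, ‖g i f‖ ≤ M := fun f => by
    obtain ⟨M, hM⟩ :=
      exists_norm_sum_apply_le_of_not_unboundedVariationOn (hμ f).not_unboundedVariationOn_univ
    exact ⟨M, fun ⟨(N, B, x), hB, hd, hx⟩ => by simpa [g] using hM N B x hB hd hx⟩
  obtain ⟨C, hC⟩ := banach_steinhaus hg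
  exact semivar_ne_top_of_norm_sum_apply_le C fun N B x hB hd hx => hC ⟨(N, B, x), hB, hd, hx⟩
end

section
/- Bounded weak convergence theorem for i-measures: if μ : 𝓜 → L(E,F) is an i-measure and (fₙ) ⊆ M_𝓜(Z,E) are uniformly bounded and converge pointwise to f : Z → E in the weak topology of E, then ∫_Z fₙ dμ converges to ∫_Z f dμ in the weak topology of F. -/
open Filter Topology ENNReal

/-- `HasCVIntegral μ g y`: the countably-valued measurable function `g` has integral `y`
with respect to `μ`, i.e. `y = ∑ₙ μ(Aₙ) eₙ` for a countable measurable partition `(Aₙ)` of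
the space on which `g` takes the constant values `eₙ`. -/
def HasCVIntegral {Z E F : Type*} [MeasurableSpace Z]
    [NormedAddCommGroup E] [NormedSpace ℝ E] [NormedAddCommGroup F] [NormedSpace ℝ F]
    (μ : Set Z → E →L[ℝ] F) (g : Z → E) (y : F) : Prop :=
  ∃ (e : ℕ → E) (A : ℕ → Set Z), (∀ n, MeasurableSet (A n)) ∧
    Pairwise (Function.onFun Disjoint A) ∧ (⋃ n, A n) = Set.univ ∧
    (∀ n, ∀ z ∈ A n, g z = e n) ∧
    Tendsto (fun N => ∑ n ∈ Finset.range N, μ (A n) (e n)) atTop (𝓝 y)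

/-- `HasIntegral μ f y`: the function `f` has integral `y` with respect to `μ`, obtained by
uniform approximation by countably-valued measurable functions. -/
def HasIntegral {Z E F : Type*} [MeasurableSpace Z]
    [NormedAddCommGroup E] [NormedSpace ℝ E] [NormedAddCommGroup F] [NormedSpace ℝ F]
    (μ : Set Z → E →L[ℝ] F) (f : Z → E) (y : F) : Prop :=
  ∃ (g : ℕ → Z → E) (w : ℕ → F),
    (∀ k, HasCVIntegral μ (g k) (w k)) ∧
    (∀ (k : ℕ) (z : Z), ‖g k z - f z‖ ≤ 1 / ((k : ℝ) + 1)) ∧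
    Tendsto w atTop (𝓝 y)

open MeasureTheory

/-!
Fix `φ ∈ F*`. The set function `ν A = φ ∘ μ(A)` is an `E*`-valued vector measure: the
i-measure property makes `∑ ‖ν(Aₙ)‖` finite along disjoint sequences, and a gliding hump upgrades
this to finiteness of the variation `τ` of `ν`. For each `x : E` the scalar measure `A ↦ ν(A) x`
has a Radon–Nikodym density `Dₓ` with respect to `τ`, additive in `x` and bounded by `‖x‖`
almost everywhere. Let `W` be the countable `ℚ`-span of all values of the countably valued
approximants. Off a single null set, `x ↦ Dₓ(z)` is additive and bounded by `‖x‖` on all of `W`,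
so it extends to a functional `ψ z ∈ E*` of norm at most `1`. Then `φ (∫ h dμ) = ∫ ψ z (h z) dτ`
for every integrable `h` approximated through `W`, and the theorem reduces to dominated
convergence for `z ↦ ψ z (fₙ z)`, which converges pointwise because `fₙ z → g z` weakly.
-/

theorem ContinuousLinearMap.exists_norm_le_one_norm_le_two_mul_apply {E : Type*}
    [NormedAddCommGroup E] [NormedSpace ℝ E] (f : StrongDual ℝ E) :
    ∃ x : E, ‖x‖ ≤ 1 ∧ ‖f‖ ≤ 2 * f x := by
  rcases eq_or_ne f 0 with rfl | hf
  · exact ⟨0, by simp, by simp⟩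
  obtain ⟨x, hx, hfx⟩ := f.exists_lt_apply_of_lt_opNorm (half_lt_self (norm_pos_iff.2 hf))
  rw [Real.norm_eq_abs] at hfx
  rcases le_total 0 (f x) with h | h
  · exact ⟨x, hx.le, by rw [abs_of_nonneg h] at hfx; linarith⟩
  · refine ⟨-x, by rw [norm_neg]; exact hx.le, ?_⟩
    rw [abs_of_nonpos h] at hfx
    rw [map_neg]
    linarith

namespace IsIMeasure

variable {Z E F : Type*} [MeasurableSpace Z] [NormedAddCommGroup E] [NormedSpace ℝ E]
  [NormedAddCommGroup F] [NormedSpace ℝ F] {μ : Set Z → E →L[ℝ] F}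

theorem summable_norm_comp (hμ : IsIMeasure μ) (φ : StrongDual ℝ F) {A : ℕ → Set Z}
    (hA : ∀ n, MeasurableSet (A n)) (hd : Pairwise (Function.onFun Disjoint A)) :
    Summable fun n => ‖φ.comp (μ (A n))‖ := by
  choose x hx hφx using fun n => (φ.comp (μ (A n))).exists_norm_le_one_norm_le_two_mul_apply
  obtain ⟨y, hy⟩ := hμ.2 A hA hd x ⟨1, hx⟩
  obtain ⟨M, hM⟩ := ((φ.continuous.tendsto y).comp hy).bddAbove_range
  refine summable_of_sum_range_le (c := 2 * M) (fun n => norm_nonneg _) fun N => ?_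
  calc ∑ n ∈ Finset.range N, ‖φ.comp (μ (A n))‖
      ≤ 2 * φ (∑ n ∈ Finset.range N, μ (A n) (x n)) := by
        rw [map_sum, Finset.mul_sum]
        exact Finset.sum_le_sum fun n _ => hφx n
    _ ≤ 2 * M := by gcongr; exact hM ⟨N, rfl⟩

theorem comp_empty (hμ : IsIMeasure μ) (φ : StrongDual ℝ F) : φ.comp (μ ∅) = 0 := by
  have := hμ.summable_norm_comp φ (A := fun _ => ∅) (fun _ => .empty)
    fun _ _ _ => Set.disjoint_empty _
  rwa [summable_const_iff, norm_eq_zero] at this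

theorem hasSum_comp (hμ : IsIMeasure μ) (φ : StrongDual ℝ F) {A : ℕ → Set Z}
    (hA : ∀ n, MeasurableSet (A n)) (hd : Pairwise (Function.onFun Disjoint A)) :
    HasSum (fun n => φ.comp (μ (A n))) (φ.comp (μ (⋃ n, A n))) := by
  have hT := (hμ.summable_norm_comp φ hA hd).of_norm.hasSum
  suffices h : ∑' n, φ.comp (μ (A n)) = φ.comp (μ (⋃ n, A n)) by rwa [h] at hT
  refine ContinuousLinearMap.ext fun x => ?_
  have hx := (φ.continuous.tendsto _).comp (hμ.1 A hA hd x)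
  simp only [Function.comp_def, map_sum] at hx
  exact tendsto_nhds_unique (hT.mapL (ContinuousLinearMap.apply ℝ ℝ x)).tendsto_sum_nat hx

open scoped Classical in
noncomputable def dualMeasure (hμ : IsIMeasure μ) (φ : StrongDual ℝ F) :
    VectorMeasure Z (StrongDual ℝ E) where
  measureOf' A := if MeasurableSet A then φ.comp (μ A) else 0
  empty' := by simp [hμ.comp_empty φ]
  not_measurable' _ hA := if_neg hA
  m_iUnion' A hA hd := by
    simpa only [hA, MeasurableSet.iUnion hA, if_true] using hμ.hasSum_comp φ hA hd

theorem dualMeasure_apply (hμ : IsIMeasure μ) (φ : StrongDual ℝ F) {A : Set Z}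
    (hA : MeasurableSet A) : hμ.dualMeasure φ A = φ.comp (μ A) := by
  classical
  exact if_pos hA

end IsIMeasure

namespace MeasureTheory.VectorMeasure

variable {X V : Type*} [MeasurableSpace X] [NormedAddCommGroup V] (ν : VectorMeasure X V)

theorem sum_enorm_le_enorm_add_two_mul_variation_sdiff {H : Set X} (hH : MeasurableSet H)
    {P : Finset (Set X)} (hPH : ∀ t ∈ P, t ⊆ H) (hPd : (P : Set (Set X)).PairwiseDisjoint id)
    (hPm : ∀ t ∈ P, MeasurableSet t) {p : Set X} (hp : p ∈ P) :
    ∑ t ∈ P, ‖ν t‖ₑ ≤ ‖ν H‖ₑ + 2 * ν.variation (H \ p) := by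
  have hνp : ‖ν p‖ₑ ≤ ‖ν H‖ₑ + ν.variation (H \ p) :=
    calc ‖ν p‖ₑ = ‖ν H - ν (H \ p)‖ₑ := by
          rw [← ν.of_add_of_sdiff (hPm p hp) hH (hPH p hp), add_sub_cancel_right]
      _ ≤ ‖ν H‖ₑ + ‖ν (H \ p)‖ₑ := enorm_sub_le
      _ ≤ ‖ν H‖ₑ + ν.variation (H \ p) := by gcongr; exact ν.enorm_measure_le_variation _
  have hrest : ∑ t ∈ P.erase p, ‖ν t‖ₑ ≤ ν.variation (H \ p) := by
    refine ν.le_variation (hH.diff (hPm p hp)) (fun t ht => ?_)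
      (hPd.subset (Finset.coe_subset.2 (Finset.erase_subset _ _)))
    obtain ⟨htp, htP⟩ := Finset.mem_erase.1 ht
    exact Set.subset_sdiff.2 ⟨hPH t htP, hPd htP hp htp⟩
  calc ∑ t ∈ P, ‖ν t‖ₑ = ‖ν p‖ₑ + ∑ t ∈ P.erase p, ‖ν t‖ₑ :=
        (Finset.add_sum_erase _ _ hp).symm
    _ ≤ ‖ν H‖ₑ + ν.variation (H \ p) + ν.variation (H \ p) := add_le_add hνp hrest
    _ = ‖ν H‖ₑ + 2 * ν.variation (H \ p) := by rw [add_assoc, two_mul]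

theorem exists_variation_eq_top_one_le_variation_sdiff {H : Set X} (hH : MeasurableSet H)
    (htop : ν.variation H = ∞) :
    ∃ H' ⊆ H, MeasurableSet H' ∧ ν.variation H' = ∞ ∧ 1 ≤ ν.variation (H \ H') := by
  obtain ⟨P, hPH, hPd, hPm, hlt⟩ := ν.exists_lt_sum_of_lt_variation hH
    (a := ‖ν H‖ₑ + 2) (by rw [htop]; exact add_lt_top.2 ⟨enorm_lt_top, ofNat_lt_top⟩)
  set U := ⋃ t ∈ P, t
  have hUm : MeasurableSet U := Finset.measurableSet_biUnion P hPm
  have hUH : U ⊆ H := Set.iUnion₂_subset hPH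
  -- Either the remainder `H \ U` or one of the pieces of `P` carries infinite variation.
  by_cases hR : ν.variation (H \ U) = ∞
  · refine ⟨H \ U, Set.sdiff_subset, hH.diff hUm, hR, ?_⟩
    rw [Set.sdiff_sdiff_cancel_left hUH]
    calc (1 : ℝ≥0∞) ≤ ‖ν H‖ₑ + 2 := le_add_self.trans' one_le_two
      _ ≤ ∑ t ∈ P, ‖ν t‖ₑ := hlt.le
      _ ≤ ν.variation U :=
        ν.le_variation hUm (fun t ht => Set.subset_iUnion₂ (s := fun t (_ : t ∈ P) => t) t ht) hPd
  have hU : ν.variation U = ∞ := by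
    have := measure_inter_add_sdiff (μ := ν.variation) H hUm
    rw [Set.inter_eq_right.2 hUH, htop] at this
    exact (ENNReal.add_eq_top.1 this).resolve_right hR
  rw [show U = ⋃ t ∈ P, id t from rfl, measure_biUnion_finset hPd hPm,
    ENNReal.sum_eq_top] at hU
  obtain ⟨p, hp, hptop⟩ := hU
  refine ⟨p, hPH p hp, hPm p hp, hptop, ?_⟩
  have h2 : ‖ν H‖ₑ + 2 * 1 < ‖ν H‖ₑ + 2 * ν.variation (H \ p) :=
    (mul_one (2 : ℝ≥0∞)).symm ▸ hlt.trans_le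
      (ν.sum_enorm_le_enorm_add_two_mul_variation_sdiff hH hPH hPd hPm hp)
  exact ((ENNReal.mul_lt_mul_iff_right two_ne_zero ofNat_ne_top).1
    ((ENNReal.add_lt_add_iff_left enorm_ne_top).1 h2)).le

variable (h : ∀ A : ℕ → Set X, (∀ n, MeasurableSet (A n)) →
  Pairwise (Function.onFun Disjoint A) → ∑' n, ‖ν (A n)‖ₑ ≠ ∞)
include h

theorem tsum_enorm_ne_top_of_countable {ι : Type*} [Countable ι] {A : ι → Set X}
    (hAm : ∀ i, MeasurableSet (A i))
    (hAd : Pairwise (Function.onFun Disjoint A)) : ∑' i, ‖ν (A i)‖ₑ ≠ ∞ := by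
  obtain ⟨e, he⟩ := exists_injective_nat ι
  set B : ℕ → Set X := fun n => ⋃ (i) (_ : e i = n), A i
  have hBe : ∀ i, B (e i) = A i := fun i => by
    ext z
    simp [B, he.eq_iff]
  have hBd : Pairwise (Function.onFun Disjoint B) := fun m n hmn => by
    simp only [Function.onFun, B, Set.disjoint_iUnion_left, Set.disjoint_iUnion_right]
    rintro i rfl j rfl
    exact hAd fun hij => hmn (congrArg e hij)
  refine ne_top_of_le_ne_top (h B (fun n => .iUnion fun i => .iUnion fun _ => hAm i) hBd) ?_
  simpa only [hBe] using ENNReal.tsum_comp_le_tsum_of_injective he fun n => ‖ν (B n)‖ₑ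

theorem eq_zero_of_forall_le_variation {D : ℕ → Set X} (hDm : ∀ k, MeasurableSet (D k))
    (hDd : Pairwise (Function.onFun Disjoint D))
    {c : ℝ≥0∞} (hc : ∀ k, c ≤ ν.variation (D k)) : c = 0 := by
  by_contra hc0
  obtain ⟨a, ha0, hac⟩ := exists_between (pos_iff_ne_zero.2 hc0)
  choose P hPD hPd hPm hP using
    fun k => ν.exists_lt_sum_of_lt_variation (hDm k) (hac.trans_le (hc k))
  let B : (Σ k, {t // t ∈ P k}) → Set X := fun i => i.2
  have hBd : Pairwise (Function.onFun Disjoint B) := by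
    rintro ⟨k, s, hs⟩ ⟨l, t, ht⟩ hne
    by_cases hkl : k = l
    · subst hkl
      exact hPd k hs ht fun hst => hne (by subst hst; rfl)
    · exact (hDd hkl).mono (hPD k s hs) (hPD l t ht)
  refine tsum_enorm_ne_top_of_countable ν h (A := B) (fun i => hPm _ _ i.2.2) hBd ?_
  rw [ENNReal.tsum_sigma', eq_top_iff,
    ← ENNReal.tsum_const_eq_top_of_ne_zero (α := ℕ) ha0.ne']
  exact ENNReal.tsum_le_tsum fun k => (hP k).le.trans_eq (Finset.tsum_subtype (P k) _).symm

theorem isFiniteMeasure_variation_of_tsum_enorm_ne_top : IsFiniteMeasure ν.variation := by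
  by_contra hfin
  rw [isFiniteMeasure_iff, not_lt, top_le_iff] at hfin
  let T := {H : Set X // MeasurableSet H ∧ ν.variation H = ∞}
  have step (H : T) : ∃ H' : T, H'.1 ⊆ H.1 ∧ 1 ≤ ν.variation (H.1 \ H'.1) := by
    obtain ⟨H', hsub, hm, htop, hle⟩ :=
      ν.exists_variation_eq_top_one_le_variation_sdiff H.2.1 H.2.2
    exact ⟨⟨H', hm, htop⟩, hsub, hle⟩
  choose next hsub hle using step
  let H : ℕ → T := fun k => next^[k] ⟨Set.univ, .univ, hfin⟩
  have hHsucc (k : ℕ) : H (k + 1) = next (H k) := Function.iterate_succ_apply' next k _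
  have hanti : Antitone fun k => (H k).1 :=
    antitone_nat_of_succ_le fun k => by rw [hHsucc]; exact hsub _
  have hDd : Pairwise (Function.onFun Disjoint fun k => (H k).1 \ (H (k + 1)).1) :=
    (pairwise_disjoint_on _).2 fun m n hmn => Set.disjoint_left.2 fun z hzm hzn =>
      hzm.2 (hanti (Nat.succ_le_of_lt hmn) hzn.1)
  refine one_ne_zero (eq_zero_of_forall_le_variation ν h
    (fun k => (H k).2.1.diff (H (k + 1)).2.1) hDd fun k => ?_)
  rw [hHsucc]
  exact hle _

end MeasureTheory.VectorMeasure

theorem IsIMeasure.exists_finite_control {Z E F : Type*} [MeasurableSpace Z]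
    [NormedAddCommGroup E] [NormedSpace ℝ E] [NormedAddCommGroup F] [NormedSpace ℝ F]
    {μ : Set Z → E →L[ℝ] F} (hμ : IsIMeasure μ) (φ : StrongDual ℝ F) :
    ∃ τ : Measure Z, IsFiniteMeasure τ ∧
      ∀ A, MeasurableSet A → ‖hμ.dualMeasure φ A‖ ≤ τ.real A := by
  have hfin := VectorMeasure.isFiniteMeasure_variation_of_tsum_enorm_ne_top
    (hμ.dualMeasure φ) fun A hA hd => by
      simpa only [hμ.dualMeasure_apply φ (hA _)] using
        tsum_enorm_ne_top_iff_summable_norm.2 (hμ.summable_norm_comp φ hA hd)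
  exact ⟨_, hfin, fun A _ => VectorMeasure.norm_measure_le_variation⟩

namespace MeasureTheory.VectorMeasure

variable {Z E : Type*} [MeasurableSpace Z] [NormedAddCommGroup E] [NormedSpace ℝ E]
  (ν : VectorMeasure Z (StrongDual ℝ E)) (τ : Measure Z)

noncomputable def rnDerivApply (x : E) : Z → ℝ :=
  SignedMeasure.rnDeriv (ν.mapRange (ContinuousLinearMap.apply ℝ ℝ x).toAddMonoidHom
    (ContinuousLinearMap.apply ℝ ℝ x).continuous) τ

theorem measurable_rnDerivApply (x : E) : Measurable (ν.rnDerivApply τ x) :=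
  SignedMeasure.measurable_rnDeriv _ _

theorem integrable_rnDerivApply (x : E) : Integrable (ν.rnDerivApply τ x) τ :=
  SignedMeasure.integrable_rnDeriv _ _

variable {ν τ} [IsFiniteMeasure τ] (hν : ∀ A, MeasurableSet A → ‖ν A‖ ≤ τ.real A)
include hν

theorem setIntegral_rnDerivApply {A : Set Z} (hA : MeasurableSet A) (x : E) :
    ∫ z in A, ν.rnDerivApply τ x z ∂τ = ν A x := by
  have hac : ν.mapRange (ContinuousLinearMap.apply ℝ ℝ x).toAddMonoidHom
      (ContinuousLinearMap.apply ℝ ℝ x).continuous ≪ᵥ τ.toENNRealVectorMeasure := by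
    refine VectorMeasure.AbsolutelyContinuous.mk fun s hs hτs => ?_
    rw [Measure.toENNRealVectorMeasure_apply_measurable hs] at hτs
    have : ν s = 0 := norm_le_zero_iff.1 ((hν s hs).trans_eq (by simp [Measure.real, hτs]))
    change ν s x = 0
    simp [this]
  rw [← withDensityᵥ_apply (ν.integrable_rnDerivApply τ x) hA, rnDerivApply,
    SignedMeasure.withDensityᵥ_rnDeriv_eq _ _ hac]
  rfl

theorem rnDerivApply_add (x y : E) :
    ν.rnDerivApply τ (x + y) =ᵐ[τ] ν.rnDerivApply τ x + ν.rnDerivApply τ y := by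
  refine Integrable.ae_eq_of_forall_setIntegral_eq _ _ (ν.integrable_rnDerivApply τ _)
    ((ν.integrable_rnDerivApply τ x).add (ν.integrable_rnDerivApply τ y)) fun A hA _ => ?_
  rw [Pi.add_def, MeasureTheory.integral_add (ν.integrable_rnDerivApply τ x).integrableOn
    (ν.integrable_rnDerivApply τ y).integrableOn, setIntegral_rnDerivApply hν hA,
    setIntegral_rnDerivApply hν hA, setIntegral_rnDerivApply hν hA, (ν A).map_add]

theorem abs_rnDerivApply_le (x : E) : ∀ᵐ z ∂τ, |ν.rnDerivApply τ x z| ≤ ‖x‖ := by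
  have hbound {A : Set Z} (hA : MeasurableSet A) : |ν A x| ≤ ∫ _ in A, ‖x‖ ∂τ := by
    rw [MeasureTheory.setIntegral_const, smul_eq_mul]
    exact (ν A).le_opNorm x |>.trans (by gcongr; exact hν A hA)
  have hle := ae_le_of_forall_setIntegral_le (ν.integrable_rnDerivApply τ x)
    (integrable_const ‖x‖) fun A hA _ =>
      (setIntegral_rnDerivApply hν hA x).trans_le ((le_abs_self _).trans (hbound hA))
  have hge := ae_le_of_forall_setIntegral_le (ν.integrable_rnDerivApply τ x).neg
    (integrable_const ‖x‖) fun A hA _ => by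
      rw [Pi.neg_def, MeasureTheory.integral_neg, setIntegral_rnDerivApply hν hA x]
      exact (neg_le_abs _).trans (hbound hA)
  filter_upwards [hle, hge] with z h₁ h₂
  exact abs_le.2 ⟨neg_le.1 h₂, h₁⟩

end MeasureTheory.VectorMeasure

section RationalSpan

variable {E : Type*} [NormedAddCommGroup E] [NormedSpace ℝ E]

/-- `span ℚ S`, written as the range of a map `(S →₀ ℚ) →+ E` because `E` carries no
`Module ℚ` instance. -/
noncomputable def ratSpan (S : Set E) : AddSubgroup E :=
  (Finsupp.liftAddHom fun s : S =>
    ((smulAddHom ℝ E).flip (s : E)).comp (Rat.castHom ℝ).toAddMonoidHom).range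

theorem subset_ratSpan (S : Set E) : S ⊆ ratSpan S := fun s hs =>
  ⟨Finsupp.single ⟨s, hs⟩ 1, by simp⟩

theorem countable_ratSpan {S : Set E} (hS : S.Countable) : (ratSpan S : Set E).Countable := by
  have := hS.to_subtype
  exact Set.countable_range _

theorem rat_smul_mem_ratSpan (S : Set E) (q : ℚ) {a : E} (ha : a ∈ ratSpan S) :
    (q : ℝ) • a ∈ ratSpan S := by
  obtain ⟨c, rfl⟩ := ha
  refine ⟨q • c, ?_⟩
  induction c using Finsupp.induction with
  | zero => simp
  | single_add s r c _ _ ih =>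
    rw [smul_add, map_add, map_add, ih, smul_add, Finsupp.smul_single,
      Finsupp.liftAddHom_apply_single, Finsupp.liftAddHom_apply_single]
    simp [mul_smul]

end RationalSpan

section RealClosure

variable {E : Type*} [NormedAddCommGroup E] [NormedSpace ℝ E]

def AddSubgroup.realClosure (W : AddSubgroup E) (hW : ∀ q : ℚ, ∀ a ∈ W, (q : ℝ) • a ∈ W) :
    Submodule ℝ E where
  carrier := _root_.closure (W : Set E)
  add_mem' ha hb := W.topologicalClosure.add_mem ha hb
  zero_mem' := _root_.subset_closure W.zero_mem
  smul_mem' c a ha := by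
    have hc : c ∈ _root_.closure (Set.range ((↑) : ℚ → ℝ)) := by
      rw [Rat.denseRange_cast.closure_eq]; trivial
    exact map_mem_closure₂ continuous_smul hc ha fun _ ⟨q, hq⟩ b hb => hq ▸ hW q b hb

theorem AddSubgroup.exists_dual_extension (W : AddSubgroup E)
    (hW : ∀ q : ℚ, ∀ a ∈ W, (q : ℝ) • a ∈ W)
    (f : W →+ ℝ) (hf : ∀ a, |f a| ≤ ‖(a : E)‖) :
    ∃ ψ : StrongDual ℝ E, ‖ψ‖ ≤ 1 ∧ ∀ a : W, ψ a = f a := by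
  set V := W.realClosure hW
  let i : W → V := fun a => ⟨a, _root_.subset_closure a.2⟩
  have hi : IsUniformInducing i :=
    isUniformEmbedding_subtype_val.isUniformInducing.of_comp_iff.1
      isUniformEmbedding_subtype_val.isUniformInducing
  have hdense : DenseRange i := Subtype.dense_iff.2 <| by
    rw [← Set.range_comp]
    exact (Subtype.range_coe (s := (W : Set E))).symm ▸ subset_rfl
  have hf_unif : UniformContinuous f := LipschitzWith.uniformContinuous (K := 1) <|
    LipschitzWith.of_dist_le_mul fun a b => by
      simpa [Real.dist_eq, dist_eq_norm, ← map_sub] using hf (a - b)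
  set g := (hi.isDenseInducing hdense).extend f
  have hg_cont : Continuous g :=
    (uniformContinuous_uniformly_extend hi hdense hf_unif).continuous
  have hg_i : ∀ a, g (i a) = f a := uniformly_extend_of_ind hi hdense hf_unif
  have hg_add : ∀ u v, g (u + v) = g u + g v := fun u v =>
    hdense.induction_on₂ (p := fun u v => g (u + v) = g u + g v)
      (isClosed_eq (hg_cont.comp continuous_add)
        ((hg_cont.comp continuous_fst).add (hg_cont.comp continuous_snd)))
      (fun a b => by
        rw [show i a + i b = i (a + b) from rfl, hg_i, hg_i, hg_i, map_add]) u v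
  have hg_le : ∀ v, |g v| ≤ ‖v‖ := fun v =>
    hdense.induction_on (p := fun v => |g v| ≤ ‖v‖) v
      (isClosed_le (continuous_abs.comp hg_cont) continuous_norm)
      fun a => (hg_i a).symm ▸ hf a
  let G : V →L[ℝ] ℝ := (AddMonoidHom.mk' g hg_add).toRealLinearMap hg_cont
  have hG : ‖G‖ ≤ 1 :=
    ContinuousLinearMap.opNorm_le_bound _ zero_le_one fun v => by
      rw [one_mul, Real.norm_eq_abs]; exact hg_le v
  obtain ⟨ψ, hψG, hψ⟩ := exists_extension_norm_eq V G
  exact ⟨ψ, hψ ▸ hG, fun a => (hψG (i a)).trans (hg_i a)⟩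

end RealClosure

theorem exists_dual_family_ae_eq {Z E : Type*} [MeasurableSpace Z] [NormedAddCommGroup E]
    [NormedSpace ℝ E] {τ : Measure Z} {W : AddSubgroup E} (hWc : (W : Set E).Countable)
    (hW : ∀ q : ℚ, ∀ a ∈ W, (q : ℝ) • a ∈ W) {D : E → Z → ℝ}
    (hDm : ∀ a ∈ W, Measurable (D a)) (hadd : ∀ a ∈ W, ∀ b ∈ W, D (a + b) =ᵐ[τ] D a + D b)
    (hbd : ∀ a ∈ W, ∀ᵐ z ∂τ, |D a z| ≤ ‖a‖) :
    ∃ ψ : Z → StrongDual ℝ E, (∀ z, ‖ψ z‖ ≤ 1) ∧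
      ∀ a ∈ W, Measurable (fun z => ψ z a) ∧ (fun z => ψ z a) =ᵐ[τ] D a := by
  set G := ⋂ a ∈ (W : Set E), ⋂ b ∈ (W : Set E),
    {z | D (a + b) z = D a z + D b z ∧ |D a z| ≤ ‖a‖}
  have hGm : MeasurableSet G :=
    .biInter hWc fun a ha => .biInter hWc fun b hb =>
      (measurableSet_eq_fun (hDm _ (W.add_mem ha hb)) ((hDm a ha).add (hDm b hb))).inter
        (measurableSet_le (hDm a ha).abs measurable_const)
  have hGae : ∀ᵐ z ∂τ, z ∈ G := by
    simp only [G, Set.mem_iInter, ae_ball_iff hWc]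
    intro a ha b hb
    filter_upwards [hadd a ha b hb, hbd a ha] with z h₁ h₂ using ⟨h₁, h₂⟩
  have hext (z : Z) :
      ∃ ψ : StrongDual ℝ E, ‖ψ‖ ≤ 1 ∧ ∀ a ∈ W, ψ a = G.indicator (D a) z := by
    by_cases hz : z ∈ G
    · simp only [G, Set.mem_iInter] at hz
      obtain ⟨ψ, hψ, hψD⟩ := W.exists_dual_extension hW
        (AddMonoidHom.mk' (fun a : W => D a z) fun a b => (hz a a.2 b b.2).1)
        fun a => (hz a a.2 a a.2).2
      refine ⟨ψ, hψ, fun a ha => ?_⟩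
      rw [Set.indicator_of_mem (by simpa [G] using hz)]
      exact hψD ⟨a, ha⟩
    · exact ⟨0, by simp, fun a _ => by simp [hz]⟩
  choose ψ hψ hψD using hext
  refine ⟨ψ, hψ, fun a ha => ⟨?_, ?_⟩⟩
  · simpa only [hψD _ a ha] using (hDm a ha).indicator hGm
  · filter_upwards [hGae] with z hz
    rw [hψD z a ha, Set.indicator_of_mem hz]

section DualDensity

variable {Z E F : Type*} [MeasurableSpace Z] [NormedAddCommGroup E] [NormedSpace ℝ E]
  [NormedAddCommGroup F] [NormedSpace ℝ F]

/-- `ψ z` plays the role of the weak-* derivative `dm/dτ` at `z`, tested against the vectors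
of `S`. -/
def IsDualDensityOn (m : Set Z → StrongDual ℝ E) (τ : Measure Z) (ψ : Z → StrongDual ℝ E)
    (S : Set E) : Prop :=
  (∀ z, ‖ψ z‖ ≤ 1) ∧ ∀ a ∈ S, Measurable (fun z => ψ z a) ∧
    ∀ A, MeasurableSet A → ∫ z in A, ψ z a ∂τ = m A a

variable {m : Set Z → StrongDual ℝ E} {τ : Measure Z} {ψ : Z → StrongDual ℝ E} {S : Set E}

theorem IsDualDensityOn.mono {T : Set E} (hψ : IsDualDensityOn m τ ψ S) (hTS : T ⊆ S) :
    IsDualDensityOn m τ ψ T :=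
  ⟨hψ.1, fun a ha => hψ.2 a (hTS ha)⟩

theorem IsDualDensityOn.norm_apply_le (hψ : IsDualDensityOn m τ ψ S) (z : Z) (u : E) :
    ‖ψ z u‖ ≤ ‖u‖ :=
  ((ψ z).le_of_opNorm_le (hψ.1 z) u).trans_eq (one_mul _)

theorem IsDualDensityOn.measurable_of_partition (hψ : IsDualDensityOn m τ ψ S) {g : Z → E}
    {e : ℕ → E} {A : ℕ → Set Z} (he : ∀ n, e n ∈ S) (hAm : ∀ n, MeasurableSet (A n))
    (hAU : ⋃ n, A n = Set.univ) (hg : ∀ n, ∀ z ∈ A n, g z = e n) :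
    Measurable fun z => ψ z (g z) := by
  intro t ht
  have hpre : (fun z => ψ z (g z)) ⁻¹' t = ⋃ n, A n ∩ (fun z => ψ z (e n)) ⁻¹' t := by
    ext z
    obtain ⟨n, hn⟩ := Set.mem_iUnion.1 (hAU.symm ▸ Set.mem_univ z)
    simp only [Set.mem_preimage, Set.mem_iUnion, Set.mem_inter_iff]
    exact ⟨fun h => ⟨n, hn, hg n z hn ▸ h⟩, fun ⟨k, hk, h⟩ => (hg k z hk).symm ▸ h⟩
  rw [hpre]
  exact .iUnion fun n => (hAm n).inter ((hψ.2 _ (he n)).1 ht)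

theorem IsDualDensityOn.apply_eq_integral_of_partition {μ : Set Z → E →L[ℝ] F}
    {φ : StrongDual ℝ F} (hψ : IsDualDensityOn (fun A => φ.comp (μ A)) τ ψ S) {g : Z → E}
    {w : F} {e : ℕ → E} {A : ℕ → Set Z} (he : ∀ n, e n ∈ S) (hAm : ∀ n, MeasurableSet (A n))
    (hAd : Pairwise (Function.onFun Disjoint A)) (hAU : ⋃ n, A n = Set.univ)
    (hg : ∀ n, ∀ z ∈ A n, g z = e n)
    (hw : Tendsto (fun N => ∑ n ∈ Finset.range N, μ (A n) (e n)) atTop (𝓝 w))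
    (hint : Integrable (fun z => ψ z (g z)) τ) : φ w = ∫ z, ψ z (g z) ∂τ := by
  have hsum := hasSum_integral_iUnion hAm hAd (f := fun z => ψ z (g z))
    (by rw [hAU]; exact hint.integrableOn)
  rw [hAU, Measure.restrict_univ] at hsum
  have hterm (n : ℕ) : ∫ z in A n, ψ z (g z) ∂τ = φ (μ (A n) (e n)) := by
    rw [setIntegral_congr_fun (hAm n) fun z hz => by rw [hg n z hz]]
    exact (hψ.2 _ (he n)).2 _ (hAm n)
  simp only [hterm] at hsum
  have hφw := (φ.continuous.tendsto w).comp hw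
  simp only [Function.comp_def, map_sum] at hφw
  exact tendsto_nhds_unique hφw hsum.tendsto_sum_nat

theorem HasIntegral.exists_countable_forall_apply_eq_integral {μ : Set Z → E →L[ℝ] F}
    {f : Z → E} {y : F} (hf : HasIntegral μ f y) :
    ∃ S : Set E, S.Countable ∧ ∀ (φ : StrongDual ℝ F) (τ : Measure Z) [IsFiniteMeasure τ]
      (ψ : Z → StrongDual ℝ E), IsDualDensityOn (fun A => φ.comp (μ A)) τ ψ S →
        Measurable (fun z => ψ z (f z)) ∧
          (Integrable (fun z => ψ z (f z)) τ → φ y = ∫ z, ψ z (f z) ∂τ) := by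
  obtain ⟨g, w, hgw, hgf, hw⟩ := hf
  choose e A hAm hAd hAU hge hwe using hgw
  refine ⟨⋃ k, Set.range (e k), Set.countable_iUnion fun k => Set.countable_range _,
    fun φ τ _ ψ hψ => ?_⟩
  have he (k n : ℕ) : e k n ∈ ⋃ k, Set.range (e k) := Set.mem_iUnion.2 ⟨k, n, rfl⟩
  have hmeas (k : ℕ) := hψ.measurable_of_partition (he k) (hAm k) (hAU k) (hge k)
  have hlim (z : Z) : Tendsto (fun k => ψ z (g k z)) atTop (𝓝 (ψ z (f z))) := by
    refine ((ψ z).continuous.tendsto _).comp ?_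
    rw [tendsto_iff_norm_sub_tendsto_zero]
    exact squeeze_zero (fun _ => norm_nonneg _) (fun k => hgf k z)
      tendsto_one_div_add_atTop_nhds_zero_nat
  refine ⟨measurable_of_tendsto_metrizable hmeas (tendsto_pi_nhds.2 hlim), fun hint => ?_⟩
  have hclose (k : ℕ) (z : Z) : ‖ψ z (g k z)‖ ≤ ‖ψ z (f z)‖ + 1 :=
    calc ‖ψ z (g k z)‖ = ‖ψ z (f z) + ψ z (g k z - f z)‖ := by
          rw [map_sub, add_sub_cancel]
      _ ≤ ‖ψ z (f z)‖ + ‖g k z - f z‖ := norm_add_le_of_le le_rfl (hψ.norm_apply_le z _)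
      _ ≤ ‖ψ z (f z)‖ + 1 := by
        gcongr
        exact (hgf k z).trans ((div_le_one (by positivity)).2 (by simp))
  have hbound : Integrable (fun z => ‖ψ z (f z)‖ + 1) τ := hint.norm.add (integrable_const 1)
  have hint_k (k : ℕ) : Integrable (fun z => ψ z (g k z)) τ :=
    hbound.mono' (hmeas k).aestronglyMeasurable (ae_of_all _ (hclose k))
  have hφw : (fun k => φ (w k)) = fun k => ∫ z, ψ z (g k z) ∂τ := funext fun k =>
    hψ.apply_eq_integral_of_partition (he k) (hAm k) (hAd k) (hAU k) (hge k) (hwe k) (hint_k k)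
  refine tendsto_nhds_unique ((φ.continuous.tendsto y).comp hw) ?_
  rw [Function.comp_def, hφw]
  exact tendsto_integral_of_dominated_convergence _ (fun k => (hmeas k).aestronglyMeasurable)
    hbound (fun k => ae_of_all _ (hclose k)) (ae_of_all _ hlim)

theorem IsIMeasure.exists_isDualDensityOn {μ : Set Z → E →L[ℝ] F} (hμ : IsIMeasure μ)
    (φ : StrongDual ℝ F) {τ : Measure Z} [IsFiniteMeasure τ]
    (hτ : ∀ A, MeasurableSet A → ‖hμ.dualMeasure φ A‖ ≤ τ.real A) {S : Set E}
    (hS : S.Countable) : ∃ ψ, IsDualDensityOn (fun A => φ.comp (μ A)) τ ψ S := by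
  obtain ⟨ψ, hψ, hψD⟩ := exists_dual_family_ae_eq (countable_ratSpan hS)
    (rat_smul_mem_ratSpan S) (fun a _ => (hμ.dualMeasure φ).measurable_rnDerivApply τ a)
    (fun a _ b _ => VectorMeasure.rnDerivApply_add hτ a b)
    (fun a _ => VectorMeasure.abs_rnDerivApply_le hτ a)
  refine ⟨ψ, hψ, fun a ha => ⟨(hψD a (subset_ratSpan S ha)).1, fun A hA => ?_⟩⟩
  rw [integral_congr_ae (ae_restrict_of_ae (hψD a (subset_ratSpan S ha)).2),
    VectorMeasure.setIntegral_rnDerivApply hτ hA, hμ.dualMeasure_apply φ hA]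

end DualDensity

theorem iMeasure_bounded_weak_convergence_general {Z E F : Type*} [MeasurableSpace Z]
    [NormedAddCommGroup E] [NormedSpace ℝ E]
    [NormedAddCommGroup F] [NormedSpace ℝ F]
    (μ : Set Z → E →L[ℝ] F) (hμ : IsIMeasure μ)
    (f : ℕ → Z → E) (g : Z → E)
    (hbd : ∃ C : ℝ, ∀ n z, ‖f n z‖ ≤ C)
    (hptw : ∀ (z : Z) (ψ : StrongDual ℝ E),
      Tendsto (fun n => ψ (f n z)) atTop (𝓝 (ψ (g z))))
    (y : ℕ → F) (w : F)
    (hy : ∀ n, HasIntegral μ (f n) (y n)) (hw : HasIntegral μ g w) :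
    ∀ φ : StrongDual ℝ F, Tendsto (fun n => φ (y n)) atTop (𝓝 (φ w)) := by
  intro φ
  obtain ⟨C, hC⟩ := hbd
  choose S hS hfS using fun n => (hy n).exists_countable_forall_apply_eq_integral
  obtain ⟨T, hT, hgT⟩ := hw.exists_countable_forall_apply_eq_integral
  obtain ⟨τ, hτ, hντ⟩ := hμ.exists_finite_control φ
  obtain ⟨ψ, hψ⟩ := hμ.exists_isDualDensityOn φ hντ ((Set.countable_iUnion hS).union hT)
  have hf (n : ℕ) :=
    hfS n φ τ ψ (hψ.mono ((Set.subset_iUnion S n).trans Set.subset_union_left))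
  have hg := hgT φ τ ψ (hψ.mono Set.subset_union_right)
  have hfC (n : ℕ) (z : Z) : ‖ψ z (f n z)‖ ≤ C := (hψ.norm_apply_le z _).trans (hC n z)
  have hgC (z : Z) : ‖ψ z (g z)‖ ≤ C :=
    le_of_tendsto (hptw z (ψ z)).norm (Eventually.of_forall fun n => hfC n z)
  have hint {u : Z → E} (hu : Measurable fun z => ψ z (u z)) (huC : ∀ z, ‖ψ z (u z)‖ ≤ C) :
      Integrable (fun z => ψ z (u z)) τ :=
    (integrable_const C).mono' hu.aestronglyMeasurable (ae_of_all _ huC)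
  have hφy : (fun n => φ (y n)) = fun n => ∫ z, ψ z (f n z) ∂τ :=
    funext fun n => (hf n).2 (hint (hf n).1 (hfC n))
  rw [hφy, hg.2 (hint hg.1 hgC)]
  exact tendsto_integral_of_dominated_convergence (fun _ => C)
    (fun n => (hf n).1.aestronglyMeasurable) (integrable_const C) (fun n => ae_of_all _ (hfC n))
    (ae_of_all _ fun z => hptw z (ψ z))

/-- Bounded Weak Convergence Theorem for i-measures: if uniformly bounded measurable
functions with separable ranges converge pointwise in the weak topology of `E`, their
integrals converge in the weak topology of `F`. -/
theorem iMeasure_bounded_weak_convergence {Z E F : Type*} [MeasurableSpace Z]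
    [NormedAddCommGroup E] [NormedSpace ℝ E] [MeasurableSpace E] [BorelSpace E]
    [NormedAddCommGroup F] [NormedSpace ℝ F] [CompleteSpace F]
    (μ : Set Z → E →L[ℝ] F) (hμ : IsIMeasure μ)
    (f : ℕ → Z → E) (g : Z → E)
    (hfm : ∀ n, Measurable (f n))
    (hfs : ∀ n, TopologicalSpace.IsSeparable (Set.range (f n)))
    (hgm : Measurable g) (hgs : TopologicalSpace.IsSeparable (Set.range g))
    (hbd : ∃ C : ℝ, ∀ n z, ‖f n z‖ ≤ C)
    (hptw : ∀ (z : Z) (ψ : StrongDual ℝ E),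
      Tendsto (fun n => ψ (f n z)) atTop (𝓝 (ψ (g z))))
    (y : ℕ → F) (w : F)
    (hy : ∀ n, HasIntegral μ (f n) (y n)) (hw : HasIntegral μ g w) :
    ∀ φ : StrongDual ℝ F, Tendsto (fun n => φ (y n)) atTop (𝓝 (φ w)) :=
  iMeasure_bounded_weak_convergence_general μ hμ f g hbd hptw y w hy hw
end

section
/- Let Y be a compact metrisable space, E a Banach space, and (uₙ) a sequence of bounded Borel measurable functions Y → E with separable ranges. Then the set S of all y ∈ Y for which uₙ(y) → 0 in the weak topology of E is coanalytic. -/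
/-!
Let `F` be the linear span of the ranges of the `uₙ`, a separable space. By Hahn–Banach and
rescaling, `y` fails to be a weak-null point iff some `φ` in the closed unit ball `B` of `F*`
has `φ (uₙ y) ↛ 0`. With the weak-star topology `B` is compact and metrisable (as `F` is
separable), hence Polish, and evaluation is jointly continuous on `F × B`. So the bad pairs
`(y, φ)` form a Borel subset of the Polish space `Y × B`, and their projection to `Y`, the
complement of the weak-null set, is analytic.
-/

open Filter Topology TopologicalSpace Metric Set

section WeakNull

variable {𝕜 E ι : Type*} [RCLike 𝕜] [NormedAddCommGroup E] [NormedSpace 𝕜 E] {l : Filter ι}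

theorem forall_tendsto_dual_iff_subspace (p : Subspace 𝕜 E) (x : ι → p) :
    (∀ ψ : StrongDual 𝕜 E, Tendsto (fun i => ψ (x i)) l (𝓝 0)) ↔
      ∀ φ : StrongDual 𝕜 p, Tendsto (fun i => φ (x i)) l (𝓝 0) := by
  refine ⟨fun h φ => ?_, fun h ψ => h (ψ.comp p.subtypeL)⟩
  obtain ⟨ψ, hψ, -⟩ := exists_extension_norm_eq p φ
  simpa only [hψ] using h ψ

theorem forall_tendsto_dual_iff_closedBall (x : ι → E) :
    (∀ φ : StrongDual 𝕜 E, Tendsto (fun i => φ (x i)) l (𝓝 0)) ↔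
      ∀ φ ∈ closedBall (0 : StrongDual 𝕜 E) 1, Tendsto (fun i => φ (x i)) l (𝓝 0) := by
  refine ⟨fun h φ _ => h φ, fun h φ => ?_⟩
  set c : 𝕜 := ((‖φ‖ + 1 : ℝ) : 𝕜)
  have hc : c ≠ 0 := RCLike.ofReal_ne_zero.2 (by positivity)
  have hmem : c⁻¹ • φ ∈ closedBall (0 : StrongDual 𝕜 E) 1 := by
    rw [mem_closedBall_zero_iff, norm_smul, norm_inv, RCLike.norm_ofReal,
      abs_of_pos (by positivity), inv_mul_le_iff₀ (by positivity)]
    linarith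
  have hlim := (h _ hmem).const_mul c
  simp only [FunLike.coe_smul, Pi.smul_apply, smul_eq_mul, mul_inv_cancel_left₀ hc,
    mul_zero] at hlim
  exact hlim

end WeakNull

theorem PolishSpace.of_compactSpace_metrizableSpace (X : Type*) [TopologicalSpace X]
    [CompactSpace X] [MetrizableSpace X] : PolishSpace X :=
  letI := metrizableSpaceMetric X
  inferInstance

namespace WeakDual

variable {𝕜 E : Type*} [NontriviallyNormedField 𝕜] [SeminormedAddCommGroup E] [NormedSpace 𝕜 E]

theorem continuous_eval_closedBall (r : ℝ) :
    Continuous fun q : E × toStrongDual ⁻¹' closedBall (0 : StrongDual 𝕜 E) r =>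
      (q.2 : WeakDual 𝕜 E) q.1 := by
  refine continuous_iff_continuousAt.2 fun ⟨x₀, φ₀⟩ => ?_
  have h_eval : Continuous fun q : E × toStrongDual ⁻¹' closedBall (0 : StrongDual 𝕜 E) r =>
      (q.2 : WeakDual 𝕜 E) x₀ :=
    (eval_continuous x₀).comp (continuous_subtype_val.comp continuous_snd)
  have h_small : Tendsto (fun q : E × toStrongDual ⁻¹' closedBall (0 : StrongDual 𝕜 E) r =>
      (q.2 : WeakDual 𝕜 E) (q.1 - x₀)) (𝓝 (x₀, φ₀)) (𝓝 0) := by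
    refine squeeze_zero_norm (a := fun q => r * ‖q.1 - x₀‖) (fun q => ?_) ?_
    · exact (toStrongDual (q.2 : WeakDual 𝕜 E)).le_of_opNorm_le
        (mem_closedBall_zero_iff.1 q.2.2) _
    · simpa using (((continuous_fst.tendsto (x₀, φ₀)).sub_const x₀).norm.const_mul r)
  simpa [ContinuousAt] using (h_eval.tendsto (x₀, φ₀)).add h_small

theorem polishSpace_closedBall [ProperSpace 𝕜] [SeparableSpace E] (x' : StrongDual 𝕜 E) (r : ℝ) :
    PolishSpace (toStrongDual ⁻¹' closedBall x' r) :=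
  have := isCompact_iff_compactSpace.1 (isCompact_closedBall (𝕜 := 𝕜) x' r)
  have := metrizable_of_isCompact 𝕜 E _ (isCompact_closedBall x' r)
  .of_compactSpace_metrizableSpace _

end WeakDual

open MeasureTheory

section Coanalytic

variable {𝕜 E Y : Type*} [RCLike 𝕜] [NormedAddCommGroup E] [NormedSpace 𝕜 E]

theorem compl_setOf_forall_tendsto_dual_eq_image (p : Subspace 𝕜 E) (v : ℕ → Y → p) :
    {y | ∀ ψ : StrongDual 𝕜 E, Tendsto (fun n => ψ (v n y)) atTop (𝓝 0)}ᶜ =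
      Prod.fst '' {q : Y × WeakDual.toStrongDual ⁻¹' closedBall (0 : StrongDual 𝕜 p) 1 |
        ¬ Tendsto (fun n => (q.2 : WeakDual 𝕜 p) (v n q.1)) atTop (𝓝 0)} := by
  ext y
  simp only [mem_compl_iff, mem_ofPred_eq, forall_tendsto_dual_iff_subspace,
    forall_tendsto_dual_iff_closedBall, mem_image, Prod.exists, Subtype.exists, mem_preimage]
  push Not
  constructor
  · rintro ⟨φ, hφ, hlim⟩
    exact ⟨y, StrongDual.toWeakDual φ, hφ, hlim, rfl⟩
  · rintro ⟨y, φ, hφ, hlim, rfl⟩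
    exact ⟨WeakDual.toStrongDual φ, hφ, hlim⟩

theorem analyticSet_compl_setOf_forall_tendsto_dual [TopologicalSpace Y] [PolishSpace Y]
    [MeasurableSpace Y] [BorelSpace Y] [MeasurableSpace E] [BorelSpace E]
    (p : Subspace 𝕜 E) [SeparableSpace p] (v : ℕ → Y → p) (hv : ∀ n, Measurable (v n)) :
    AnalyticSet {y | ∀ ψ : StrongDual 𝕜 E, Tendsto (fun n => ψ (v n y)) atTop (𝓝 0)}ᶜ := by
  let B := WeakDual.toStrongDual ⁻¹' closedBall (0 : StrongDual 𝕜 p) 1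
  have : PolishSpace B := WeakDual.polishSpace_closedBall 0 1
  have : SecondCountableTopology p := UniformSpace.secondCountable_of_separable p
  let _ : MeasurableSpace B := borel B
  have : BorelSpace B := ⟨rfl⟩
  have h_meas (n : ℕ) : Measurable fun q : Y × B => (q.2 : WeakDual 𝕜 p) (v n q.1) :=
    (WeakDual.continuous_eval_closedBall (𝕜 := 𝕜) (E := p) 1).measurable.comp
      (((hv n).comp measurable_fst).prodMk measurable_snd)
  rw [compl_setOf_forall_tendsto_dual_eq_image]
  exact (measurableSet_tendsto (l := atTop) (𝓝 0) h_meas).compl.analyticSet.image_of_continuous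
    continuous_fst

end Coanalytic

theorem weak_null_set_coanalytic_general {Y E : Type*}
    [TopologicalSpace Y] [CompactSpace Y] [TopologicalSpace.MetrizableSpace Y]
    [MeasurableSpace Y] [BorelSpace Y]
    [NormedAddCommGroup E] [NormedSpace ℝ E] [MeasurableSpace E] [BorelSpace E]
    (u : ℕ → Y → E) (hm : ∀ n, Measurable (u n))
    (hs : ∀ n, TopologicalSpace.IsSeparable (Set.range (u n))) :
    MeasureTheory.AnalyticSet
      ({y : Y | ∀ ψ : StrongDual ℝ E,
        Tendsto (fun n => ψ (u n y)) atTop (𝓝 0)}ᶜ) := by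
  have : PolishSpace Y := .of_compactSpace_metrizableSpace Y
  let F : Subspace ℝ E := Submodule.span ℝ (⋃ n, range (u n))
  have : SeparableSpace F := (isSeparable_iUnion.2 hs).span.separableSpace
  have hmem : ∀ n y, u n y ∈ F := fun n y =>
    Submodule.subset_span (mem_iUnion.2 ⟨n, mem_range_self y⟩)
  exact analyticSet_compl_setOf_forall_tendsto_dual F (fun n y => ⟨u n y, hmem n y⟩)
    fun n => (hm n).subtype_mk

/-- If `Y` is compact metrisable and `(uₙ)` are bounded Borel functions `Y → E` with
separable ranges, then the set of `y` where `uₙ(y) → 0` weakly is coanalytic, i.e. its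
complement is analytic. -/
theorem weak_null_set_coanalytic {Y E : Type*}
    [TopologicalSpace Y] [CompactSpace Y] [TopologicalSpace.MetrizableSpace Y]
    [MeasurableSpace Y] [BorelSpace Y]
    [NormedAddCommGroup E] [NormedSpace ℝ E] [MeasurableSpace E] [BorelSpace E]
    (u : ℕ → Y → E) (hm : ∀ n, Measurable (u n))
    (hs : ∀ n, TopologicalSpace.IsSeparable (Set.range (u n)))
    (hb : ∀ n, ∃ C : ℝ, ∀ y, ‖u n y‖ ≤ C) :
    MeasureTheory.AnalyticSet
      ({y : Y | ∀ ψ : StrongDual ℝ E,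
        Tendsto (fun n => ψ (u n y)) atTop (𝓝 0)}ᶜ) :=
  weak_null_set_coanalytic_general u hm hs
end
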